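/- arXiv:2506.01101 — 6 statements merged into one kernel-verified Lean document; each statement's English description precedes it below -/
import Mathlib

section
/- Let l : ℝ → ℝ be non-constant, (weakly) increasing and continuous, let λ ∈ ℝ, and let X ∈ 𝒳_l. Then the function g_X(t) = E[l(−X−t)] − λ is continuous and (weakly) decreasing on ℝ. Moreover, if there exist t_u, t_l ∈ ℝ such that g_X(t_u) ≤ 0 < g_X(t_l), then SR_{l,λ}(X) is finite and g_X(SR_{l,λ}(X)) = 0. -/
/-!
Monotonicity of `l` makes `t ↦ l (-X - t)` pointwise antitone, so on `[t₀ - 1, t₀ + 1]` it is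
dominated by `|l (-X - (t₀ - 1))| + |l (-X - (t₀ + 1))|`, and dominated convergence gives
continuity of `g_X`. The sublevel set `{t | g_X t ≤ 0}` is then closed, so it contains its
infimum, while every point strictly below the infimum lies in the open set `{0 < g_X}`, whose
closure forces `0 ≤ g_X` at the infimum.
-/

open MeasureTheory Filter Set

theorem continuous_integral_of_antitone {Ω : Type*} [MeasurableSpace Ω] {μ : Measure Ω}
    {F : ℝ → Ω → ℝ} (hF_anti : ∀ ω, Antitone fun t => F t ω)
    (hF_cont : ∀ ω, Continuous fun t => F t ω) (hF_int : ∀ t, Integrable (F t) μ) :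
    Continuous fun t => ∫ ω, F t ω ∂μ := by
  refine continuous_iff_continuousAt.2 fun t₀ => ?_
  refine continuousAt_of_dominated (bound := fun ω => |F (t₀ - 1) ω| + |F (t₀ + 1) ω|)
    (Eventually.of_forall fun t => (hF_int t).aestronglyMeasurable) ?_
    ((hF_int _).abs.add (hF_int _).abs) (ae_of_all _ fun ω => (hF_cont ω).continuousAt)
  filter_upwards [Icc_mem_nhds (sub_one_lt t₀) (lt_add_one t₀)] with t ht
  refine ae_of_all _ fun ω => ?_
  have h_upper : F t ω ≤ F (t₀ - 1) ω := hF_anti ω ht.1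
  have h_lower : F (t₀ + 1) ω ≤ F t ω := hF_anti ω ht.2
  rw [Real.norm_eq_abs, abs_le]
  constructor <;> linarith [neg_abs_le (F (t₀ + 1) ω), le_abs_self (F (t₀ - 1) ω),
    abs_nonneg (F (t₀ - 1) ω), abs_nonneg (F (t₀ + 1) ω)]

theorem Antitone.bddBelow_setOf_le {α β : Type*} [LinearOrder α] [Preorder β] {f : α → β}
    (hf : Antitone f) {c : β} {t₀ : α} (ht₀ : c < f t₀) :
    BddBelow {t | f t ≤ c} :=
  ⟨t₀, fun _ ht => le_of_not_gt fun hlt => (ht.trans_lt ht₀).not_ge (hf hlt.le)⟩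

theorem Continuous.apply_csInf_setOf_le {f : ℝ → ℝ} (hf : Continuous f) {c : ℝ}
    (hne : {t | f t ≤ c}.Nonempty) (hbdd : BddBelow {t | f t ≤ c}) :
    f (sInf {t | f t ≤ c}) = c := by
  set S := {t | f t ≤ c}
  have h_le : f (sInf S) ≤ c := (isClosed_le hf continuous_const).csInf_mem hne hbdd
  have h_below : Iio (sInf S) ⊆ {t | c < f t} := fun t ht =>
    show c < f t from lt_of_not_ge fun hmem => (csInf_le hbdd hmem).not_gt ht
  have h_ge : c ≤ f (sInf S) :=
    closure_lt_subset_le continuous_const hf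
      (closure_mono h_below ((closure_Iio (sInf S)).symm ▸ self_mem_Iic))
  exact le_antisymm h_le h_ge

theorem ubsr_root_of_g_general
    {Ω : Type*} [MeasurableSpace Ω] (P : Measure Ω)
    (l : ℝ → ℝ) (lam : ℝ) (X : Ω → ℝ)
    (hl_mono : Monotone l)
    (hl_cont : Continuous l)
    (hX : ∀ t : ℝ, Integrable (fun ω => l (-X ω - t)) P) :
    Continuous (fun t : ℝ => (∫ ω, l (-X ω - t) ∂P) - lam) ∧
    Antitone (fun t : ℝ => (∫ ω, l (-X ω - t) ∂P) - lam) ∧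
    (∀ tu tl : ℝ,
      (∫ ω, l (-X ω - tu) ∂P) - lam ≤ 0 →
      0 < (∫ ω, l (-X ω - tl) ∂P) - lam →
      ({t : ℝ | (∫ ω, l (-X ω - t) ∂P) ≤ lam}).Nonempty ∧
      BddBelow {t : ℝ | (∫ ω, l (-X ω - t) ∂P) ≤ lam} ∧
      (∫ ω, l (-X ω - sInf {t : ℝ | (∫ ω, l (-X ω - t) ∂P) ≤ lam}) ∂P) - lam = 0) := by
  have h_cont : Continuous fun t : ℝ => ∫ ω, l (-X ω - t) ∂P :=
    continuous_integral_of_antitone (fun _ _ _ hst => hl_mono (by linarith))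
      (fun _ => hl_cont.comp (continuous_const.sub continuous_id)) hX
  have h_anti : Antitone fun t : ℝ => ∫ ω, l (-X ω - t) ∂P := fun s t hst =>
    integral_mono (hX t) (hX s) fun _ => hl_mono (by linarith)
  refine ⟨h_cont.sub continuous_const, fun s t hst => sub_le_sub_right (h_anti hst) lam, fun tu tl htu htl => ?_⟩
  have hne : {t : ℝ | (∫ ω, l (-X ω - t) ∂P) ≤ lam}.Nonempty := ⟨tu, sub_nonpos.1 htu⟩
  have hbdd := h_anti.bddBelow_setOf_le (sub_pos.1 htl)
  exact ⟨hne, hbdd, sub_eq_zero.2 (h_cont.apply_csInf_setOf_le hne hbdd)⟩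

/-- For `l` non-constant, increasing and continuous, `X ∈ 𝒳_l`, the function
`g_X(t) = E[l(-X-t)] - λ` is continuous and decreasing; moreover, under the bracketing
condition, `SR_{l,λ}(X)` is finite (the defining set is nonempty and bounded below) and is
a root of `g_X`. -/
theorem ubsr_root_of_g
    {Ω : Type*} [MeasurableSpace Ω] (P : Measure Ω) [IsProbabilityMeasure P]
    (l : ℝ → ℝ) (lam : ℝ) (X : Ω → ℝ)
    (hl_nonconst : ∃ x y : ℝ, l x ≠ l y)
    (hl_mono : Monotone l)
    (hl_cont : Continuous l)
    (hX : ∀ t : ℝ, Integrable (fun ω => l (-X ω - t)) P) :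
    Continuous (fun t : ℝ => (∫ ω, l (-X ω - t) ∂P) - lam) ∧
    Antitone (fun t : ℝ => (∫ ω, l (-X ω - t) ∂P) - lam) ∧
    (∀ tu tl : ℝ,
      (∫ ω, l (-X ω - tu) ∂P) - lam ≤ 0 →
      0 < (∫ ω, l (-X ω - tl) ∂P) - lam →
      ({t : ℝ | (∫ ω, l (-X ω - t) ∂P) ≤ lam}).Nonempty ∧
      BddBelow {t : ℝ | (∫ ω, l (-X ω - t) ∂P) ≤ lam} ∧
      (∫ ω, l (-X ω - sInf {t : ℝ | (∫ ω, l (-X ω - t) ∂P) ≤ lam}) ∂P) - lam = 0) :=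
  ubsr_root_of_g_general P l lam X hl_mono hl_cont hX
end

section
/- Let l : ℝ → ℝ be non-constant, (weakly) increasing, continuous and convex, let λ ∈ ℝ, and suppose that for every X ∈ 𝒳_l there exist t_u(X), t_l(X) ∈ ℝ with g_X(t_u(X)) ≤ 0 < g_X(t_l(X)). Then the acceptance set 𝒜_{l,λ} = { X ∈ 𝒳_l : SR_{l,λ}(X) ≤ 0 } is convex, and SR_{l,λ} is convex on 𝒳_l: for all X₁, X₂ ∈ 𝒳_l and α ∈ [0,1], SR_{l,λ}(αX₁ + (1−α)X₂) ≤ α·SR_{l,λ}(X₁) + (1−α)·SR_{l,λ}(X₂). -/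
/-!
Convexity of `l` makes `(X, t) ↦ l (-X - t)` jointly convex, so for `t₁ > SR(X₁)` and
`t₂ > SR(X₂)` integration gives
`E[l(-Xα - (α t₁ + (1-α) t₂))] ≤ α E[l(-X₁ - t₁)] + (1-α) E[l(-X₂ - t₂)] ≤ λ`,
where `Xα = α X₁ + (1-α) X₂`; hence `SR(Xα) ≤ α t₁ + (1-α) t₂`.
The integrand on the left lies between `l(-X₁ - t)` and `l(-X₂ - t)` because `l` is monotone, so it
is integrable as soon as `Xα` is a.e. measurable. That holds because `l` is strictly increasing on
some `[b, ∞)`: then `{-X > c} = {l(-X - (c - b)) > l b}`, so the measurability of `X` is read off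
that of the integrands.
-/

open MeasureTheory

/-- The utility-based shortfall risk `SR_{l,λ}(X) = inf { t : E[l(-X-t)] ≤ λ }`. -/
noncomputable def SR {Ω : Type*} [MeasurableSpace Ω] (P : Measure Ω)
    (l : ℝ → ℝ) (lam : ℝ) (X : Ω → ℝ) : ℝ :=
  sInf {t : ℝ | (∫ ω, l (-X ω - t) ∂P) ≤ lam}

open Set

section

variable {Ω : Type*} [MeasurableSpace Ω] {μ : Measure Ω} {l : ℝ → ℝ}

theorem ConvexOn.exists_strictMonoOn_Ici (hl_mono : Monotone l)
    (hl_convex : ConvexOn ℝ univ l) (hl_nonconst : ∃ x y : ℝ, l x ≠ l y) :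
    ∃ b, StrictMonoOn l (Ici b) := by
  obtain ⟨x, y, hxy⟩ := hl_nonconst
  rcases lt_or_gt_of_ne (fun h : x = y => hxy (congrArg l h)) with h | h
  · exact ⟨y, by simpa using
      hl_convex.strictMonoOn (mem_univ x) h ((hl_mono h.le).lt_of_ne hxy)⟩
  · exact ⟨x, by simpa using
      hl_convex.strictMonoOn (mem_univ y) h ((hl_mono h.le).lt_of_ne hxy.symm)⟩

theorem aemeasurable_of_forall_aemeasurable_comp_sub {b : ℝ} (hl_mono : Monotone l)
    (hb : StrictMonoOn l (Ici b)) {g : Ω → ℝ} (hg : ∀ t, AEMeasurable (fun ω => l (g ω - t)) μ) :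
    AEMeasurable g μ := by
  refine NullMeasurable.aemeasurable (measurable_of_Ioi fun c => ?_)
  have hpre : g ⁻¹' Ioi c = (fun ω => l (g ω - (c - b))) ⁻¹' Ioi (l b) := by
    ext ω
    simp only [mem_preimage, mem_Ioi]
    constructor
    · intro hc
      exact hb self_mem_Ici (by rw [mem_Ici]; linarith) (by linarith)
    · intro hlt
      linarith [hl_mono.reflect_lt hlt]
  change NullMeasurableSet (g ⁻¹' Ioi c) μ
  rw [hpre]
  exact (hg _).nullMeasurable measurableSet_Ioi

theorem Monotone.integrable_comp_of_mem_uIcc (hl : Monotone l) {f g h : Ω → ℝ}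
    (hh : AEMeasurable h μ) (hf : Integrable (fun ω => l (f ω)) μ)
    (hg : Integrable (fun ω => l (g ω)) μ)
    (hfgh : ∀ ω, h ω ∈ uIcc (f ω) (g ω)) : Integrable (fun ω => l (h ω)) μ := by
  have hbound : ∀ {a b c : ℝ}, a ≤ b → b ≤ c → |l b| ≤ |l a| + |l c| := fun hab hbc =>
    (abs_le_max_abs_abs (hl hab) (hl hbc)).trans
      (max_le_add_of_nonneg (abs_nonneg _) (abs_nonneg _))
  refine (hf.abs.add hg.abs).mono' (hl.measurable.comp_aemeasurable hh).aestronglyMeasurable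
    (ae_of_all _ fun ω => ?_)
  rw [Real.norm_eq_abs, Pi.add_apply]
  have hω := hfgh ω
  rcases le_total (f ω) (g ω) with hfg | hgf
  · rw [uIcc_of_le hfg] at hω
    exact hbound hω.1 hω.2
  · rw [uIcc_of_ge hgf] at hω
    exact (hbound hω.1 hω.2).trans_eq (add_comm _ _)

theorem ConvexOn.integral_comp_combo_le (hl : ConvexOn ℝ univ l) {f g : Ω → ℝ} {α : ℝ}
    (hα : α ∈ Icc (0 : ℝ) 1) (hf : Integrable (fun ω => l (f ω)) μ)
    (hg : Integrable (fun ω => l (g ω)) μ)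
    (hfg : Integrable (fun ω => l (α * f ω + (1 - α) * g ω)) μ) :
    ∫ ω, l (α * f ω + (1 - α) * g ω) ∂μ ≤
      α * ∫ ω, l (f ω) ∂μ + (1 - α) * ∫ ω, l (g ω) ∂μ := by
  rw [← integral_const_mul, ← integral_const_mul,
    ← integral_add (hf.const_mul _) (hg.const_mul _)]
  exact integral_mono hfg ((hf.const_mul _).add (hg.const_mul _)) fun ω =>
    hl.2 trivial trivial hα.1 (sub_nonneg.2 hα.2) (add_sub_cancel _ _)

end

section ShortfallRisk

variable {Ω : Type*} [MeasurableSpace Ω] {P : Measure Ω} {l : ℝ → ℝ} {lam α : ℝ}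
  {X X₁ X₂ : Ω → ℝ}

theorem antitone_integral_comp_neg_sub (hl : Monotone l)
    (hX : ∀ t, Integrable (fun ω => l (-X ω - t)) P) :
    Antitone fun t => ∫ ω, l (-X ω - t) ∂P :=
  fun s t hst => integral_mono (hX t) (hX s) fun ω => hl (by linarith)

theorem bddBelow_setOf_integral_le (hl : Monotone l)
    (hX : ∀ t, Integrable (fun ω => l (-X ω - t)) P) {tl : ℝ}
    (htl : lam < ∫ ω, l (-X ω - tl) ∂P) :
    BddBelow {t | ∫ ω, l (-X ω - t) ∂P ≤ lam} :=
  ⟨tl, fun _ hs => le_of_not_gt fun hst =>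
    (htl.trans_le (antitone_integral_comp_neg_sub hl hX hst.le)).not_ge hs⟩

theorem integral_le_of_SR_lt (hl : Monotone l)
    (hX : ∀ t, Integrable (fun ω => l (-X ω - t)) P)
    (hne : {t | ∫ ω, l (-X ω - t) ∂P ≤ lam}.Nonempty) {t : ℝ} (ht : SR P l lam X < t) :
    ∫ ω, l (-X ω - t) ∂P ≤ lam := by
  obtain ⟨s, hs, hst⟩ := exists_lt_of_csInf_lt hne ht
  exact (antitone_integral_comp_neg_sub hl hX hst.le).trans hs

theorem aemeasurable_of_integrable_comp_neg_sub (hl_mono : Monotone l)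
    (hl_convex : ConvexOn ℝ univ l) (hl_nonconst : ∃ x y : ℝ, l x ≠ l y)
    (hX : ∀ t, Integrable (fun ω => l (-X ω - t)) P) : AEMeasurable X P := by
  obtain ⟨b, hb⟩ := hl_convex.exists_strictMonoOn_Ici hl_mono hl_nonconst
  exact aemeasurable_neg_iff.1 (aemeasurable_of_forall_aemeasurable_comp_sub hl_mono hb
    fun t => (hX t).aemeasurable)

theorem integrable_comp_neg_combo_sub (hl_mono : Monotone l)
    (hl_convex : ConvexOn ℝ univ l) (hl_nonconst : ∃ x y : ℝ, l x ≠ l y)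
    (hX₁ : ∀ t, Integrable (fun ω => l (-X₁ ω - t)) P)
    (hX₂ : ∀ t, Integrable (fun ω => l (-X₂ ω - t)) P) (hα : α ∈ Icc (0 : ℝ) 1)
    (t : ℝ) : Integrable (fun ω => l (-(α * X₁ ω + (1 - α) * X₂ ω) - t)) P := by
  have hm₁ := aemeasurable_of_integrable_comp_neg_sub hl_mono hl_convex hl_nonconst hX₁
  have hm₂ := aemeasurable_of_integrable_comp_neg_sub hl_mono hl_convex hl_nonconst hX₂
  refine hl_mono.integrable_comp_of_mem_uIcc
    (((hm₁.const_mul α).add (hm₂.const_mul (1 - α))).neg.sub_const t) (hX₁ t) (hX₂ t)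
    fun ω => ?_
  have hcombo := convex_uIcc (-X₁ ω - t) (-X₂ ω - t) left_mem_uIcc right_mem_uIcc hα.1
    (sub_nonneg.2 hα.2) (add_sub_cancel α 1)
  convert hcombo using 1
  simp only [smul_eq_mul]
  ring

theorem SR_combo_le (hl_mono : Monotone l) (hl_convex : ConvexOn ℝ univ l)
    (hX₁ : ∀ t, Integrable (fun ω => l (-X₁ ω - t)) P)
    (hX₂ : ∀ t, Integrable (fun ω => l (-X₂ ω - t)) P) (hα : α ∈ Icc (0 : ℝ) 1)
    (hX : ∀ t, Integrable (fun ω => l (-(α * X₁ ω + (1 - α) * X₂ ω) - t)) P)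
    (hne₁ : {t | ∫ ω, l (-X₁ ω - t) ∂P ≤ lam}.Nonempty)
    (hne₂ : {t | ∫ ω, l (-X₂ ω - t) ∂P ≤ lam}.Nonempty)
    (hbdd : BddBelow {t | ∫ ω, l (-(α * X₁ ω + (1 - α) * X₂ ω) - t) ∂P ≤ lam}) :
    SR P l lam (fun ω => α * X₁ ω + (1 - α) * X₂ ω) ≤
      α * SR P l lam X₁ + (1 - α) * SR P l lam X₂ := by
  refine le_of_forall_pos_le_add fun ε hε => ?_
  set t₁ := SR P l lam X₁ + ε
  set t₂ := SR P l lam X₂ + ε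
  have hcombo : ∀ ω, -(α * X₁ ω + (1 - α) * X₂ ω) - (α * t₁ + (1 - α) * t₂) =
      α * (-X₁ ω - t₁) + (1 - α) * (-X₂ ω - t₂) := fun ω => by ring
  have hint : ∫ ω, l (-(α * X₁ ω + (1 - α) * X₂ ω) - (α * t₁ + (1 - α) * t₂)) ∂P ≤ lam :=
    calc ∫ ω, l (-(α * X₁ ω + (1 - α) * X₂ ω) - (α * t₁ + (1 - α) * t₂)) ∂P
        ≤ α * ∫ ω, l (-X₁ ω - t₁) ∂P + (1 - α) * ∫ ω, l (-X₂ ω - t₂) ∂P := by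
          simp only [hcombo]
          exact hl_convex.integral_comp_combo_le hα (hX₁ t₁) (hX₂ t₂)
            (by simpa only [hcombo] using hX (α * t₁ + (1 - α) * t₂))
      _ ≤ α * lam + (1 - α) * lam := by
          have h₁ := integral_le_of_SR_lt hl_mono hX₁ hne₁ (lt_add_of_pos_right _ hε)
          have h₂ := integral_le_of_SR_lt hl_mono hX₂ hne₂ (lt_add_of_pos_right _ hε)
          exact add_le_add (mul_le_mul_of_nonneg_left h₁ hα.1)
            (mul_le_mul_of_nonneg_left h₂ (sub_nonneg.2 hα.2))
      _ = lam := by ring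
  calc SR P l lam (fun ω => α * X₁ ω + (1 - α) * X₂ ω) ≤ α * t₁ + (1 - α) * t₂ :=
        csInf_le hbdd hint
    _ = α * SR P l lam X₁ + (1 - α) * SR P l lam X₂ + ε := by ring

end ShortfallRisk

theorem SR_convex_risk_measure_general
    {Ω : Type*} [MeasurableSpace Ω] (P : Measure Ω)
    (l : ℝ → ℝ) (lam : ℝ)
    (hl_nonconst : ∃ x y : ℝ, l x ≠ l y)
    (hl_mono : Monotone l)
    (hl_convex : ConvexOn ℝ Set.univ l)
    (hbracket : ∀ X : Ω → ℝ, (∀ t : ℝ, Integrable (fun ω => l (-X ω - t)) P) →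
      ∃ tu tl : ℝ, (∫ ω, l (-X ω - tu) ∂P) - lam ≤ 0 ∧
        0 < (∫ ω, l (-X ω - tl) ∂P) - lam) :
    (∀ X₁ X₂ : Ω → ℝ,
      (∀ t : ℝ, Integrable (fun ω => l (-X₁ ω - t)) P) →
      (∀ t : ℝ, Integrable (fun ω => l (-X₂ ω - t)) P) →
      SR P l lam X₁ ≤ 0 → SR P l lam X₂ ≤ 0 →
      ∀ α : ℝ, α ∈ Set.Icc (0 : ℝ) 1 →
        SR P l lam (fun ω => α * X₁ ω + (1 - α) * X₂ ω) ≤ 0) ∧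
    (∀ X₁ X₂ : Ω → ℝ,
      (∀ t : ℝ, Integrable (fun ω => l (-X₁ ω - t)) P) →
      (∀ t : ℝ, Integrable (fun ω => l (-X₂ ω - t)) P) →
      ∀ α : ℝ, α ∈ Set.Icc (0 : ℝ) 1 →
        SR P l lam (fun ω => α * X₁ ω + (1 - α) * X₂ ω) ≤
          α * SR P l lam X₁ + (1 - α) * SR P l lam X₂) := by
  have hacc : ∀ X : Ω → ℝ, (∀ t, Integrable (fun ω => l (-X ω - t)) P) →
      {t | ∫ ω, l (-X ω - t) ∂P ≤ lam}.Nonempty := fun X hX => by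
    obtain ⟨tu, -, htu, -⟩ := hbracket X hX
    exact ⟨tu, sub_nonpos.1 htu⟩
  have hconv : ∀ X₁ X₂ : Ω → ℝ, (∀ t, Integrable (fun ω => l (-X₁ ω - t)) P) →
      (∀ t, Integrable (fun ω => l (-X₂ ω - t)) P) → ∀ α ∈ Icc (0 : ℝ) 1,
        SR P l lam (fun ω => α * X₁ ω + (1 - α) * X₂ ω) ≤
          α * SR P l lam X₁ + (1 - α) * SR P l lam X₂ := by
    intro X₁ X₂ hX₁ hX₂ α hα
    have hX := integrable_comp_neg_combo_sub hl_mono hl_convex hl_nonconst hX₁ hX₂ hα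
    obtain ⟨-, tl, -, htl⟩ := hbracket _ hX
    exact SR_combo_le hl_mono hl_convex hX₁ hX₂ hα hX (hacc X₁ hX₁) (hacc X₂ hX₂)
      (bddBelow_setOf_integral_le hl_mono hX (sub_pos.1 htl))
  refine ⟨fun X₁ X₂ hX₁ hX₂ h₁ h₂ α hα => (hconv X₁ X₂ hX₁ hX₂ α hα).trans ?_, hconv⟩
  exact add_nonpos (mul_nonpos_of_nonneg_of_nonpos hα.1 h₁)
    (mul_nonpos_of_nonneg_of_nonpos (sub_nonneg.2 hα.2) h₂)

/-- If in addition `l` is convex, the acceptance set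
`𝒜_{l,λ} = { X ∈ 𝒳_l : SR_{l,λ}(X) ≤ 0 }` is convex and `SR_{l,λ}` is convex on `𝒳_l`. -/
theorem SR_convex_risk_measure
    {Ω : Type*} [MeasurableSpace Ω] (P : Measure Ω) [IsProbabilityMeasure P]
    (l : ℝ → ℝ) (lam : ℝ)
    (hl_nonconst : ∃ x y : ℝ, l x ≠ l y)
    (hl_mono : Monotone l)
    (hl_cont : Continuous l)
    (hl_convex : ConvexOn ℝ Set.univ l)
    (hbracket : ∀ X : Ω → ℝ, (∀ t : ℝ, Integrable (fun ω => l (-X ω - t)) P) →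
      ∃ tu tl : ℝ, (∫ ω, l (-X ω - tu) ∂P) - lam ≤ 0 ∧
        0 < (∫ ω, l (-X ω - tl) ∂P) - lam) :
    (∀ X₁ X₂ : Ω → ℝ,
      (∀ t : ℝ, Integrable (fun ω => l (-X₁ ω - t)) P) →
      (∀ t : ℝ, Integrable (fun ω => l (-X₂ ω - t)) P) →
      SR P l lam X₁ ≤ 0 → SR P l lam X₂ ≤ 0 →
      ∀ α : ℝ, α ∈ Set.Icc (0 : ℝ) 1 →
        SR P l lam (fun ω => α * X₁ ω + (1 - α) * X₂ ω) ≤ 0) ∧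
    (∀ X₁ X₂ : Ω → ℝ,
      (∀ t : ℝ, Integrable (fun ω => l (-X₁ ω - t)) P) →
      (∀ t : ℝ, Integrable (fun ω => l (-X₂ ω - t)) P) →
      ∀ α : ℝ, α ∈ Set.Icc (0 : ℝ) 1 →
        SR P l lam (fun ω => α * X₁ ω + (1 - α) * X₂ ω) ≤
          α * SR P l lam X₁ + (1 - α) * SR P l lam X₂) :=
  SR_convex_risk_measure_general P l lam hl_nonconst hl_mono hl_convex hbracket
end

section
/- Let u be a utility function as in the context and let X ∈ 𝒳̄_u. Suppose there exist t_u, t_l ∈ ℝ such that G'_X(t_u) ≤ 0 < G'_X(t_l), where G'_X(t) = 1 − E[u'(−X−t)]. Then: (i) the map G_X(t) = t + E[u(−X−t)] is convex and differentiable on ℝ with derivative G'_X(t) = 1 − E[u'(−X−t)]; (ii) SR_{u',1}(X) is a root of G'_X as well as a minimizer of G_X over ℝ; and (iii) OCE_u(X) = SR_{u',1}(X) + E[u(−X − SR_{u',1}(X))]. -/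
/-!
Dominated differentiation under the integral (near `t` everything is bounded by
`u' (-X - (t - 1))`, as `u'` is monotone and nonnegative) gives `G_X' = 1 - E[u'(-X - t)]`, which
is nondecreasing, so `G_X` is convex. The map `t ↦ E[u'(-X - t)]` is continuous and antitone,
is below `1` at `t_l`, and exceeds `1` far to the left by monotone convergence because `u'` takes
values above `1`. Hence it equals `1` at the left end `SR_{u',1}(X)` of its sublevel set
`{· ≤ 1}`, and a critical point of the convex `G_X` is a global minimizer.
-/

open MeasureTheory Filter Topology Set

lemma ConvexOn.monotone_of_hasDerivAt {u u' : ℝ → ℝ} (hconv : ConvexOn ℝ univ u)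
    (hd : ∀ x, HasDerivAt u (u' x) x) : Monotone u' := by
  have hderiv : deriv u = u' := funext fun x => (hd x).deriv
  rw [← hderiv, ← monotoneOn_univ]
  exact hconv.monotoneOn_deriv fun x _ => (hd x).differentiableAt

lemma Monotone.nonneg_of_hasDerivAt {u u' : ℝ → ℝ} (hmono : Monotone u)
    (hd : ∀ x, HasDerivAt u (u' x) x) (x : ℝ) : 0 ≤ u' x :=
  (hd x).deriv ▸ hmono.deriv_nonneg

lemma Antitone.apply_sInf_setOf_le_eq {f : ℝ → ℝ} (hanti : Antitone f) (hcont : Continuous f)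
    {a b c : ℝ} (ha : f a ≤ c) (hb : c < f b) : f (sInf {t | f t ≤ c}) = c := by
  set S := {t | f t ≤ c}
  have hbdd : BddBelow S :=
    ⟨b, fun t ht => le_of_not_ge fun htb => (hb.trans_le (hanti htb)).not_ge ht⟩
  refine le_antisymm ((isClosed_le hcont continuous_const).csInf_mem ⟨a, ha⟩ hbdd) ?_
  have hleft : ∀ᶠ t in 𝓝[<] sInf S, c ≤ f t := eventually_nhdsWithin_of_forall fun t ht =>
    le_of_not_ge fun hle => notMem_of_lt_csInf ht hbdd hle
  exact _root_.ge_of_tendsto hcont.continuousWithinAt.tendsto hleft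

section IntegralShift

variable {Ω : Type*} [MeasurableSpace Ω] {P : Measure Ω} {φ φ' : ℝ → ℝ} {X : Ω → ℝ}

lemma Monotone.norm_apply_sub_le_of_mem_ball (hmono : Monotone φ) (hnonneg : ∀ x, 0 ≤ φ x)
    {t s : ℝ} (hs : s ∈ Metric.ball t 1) (x : ℝ) : ‖φ (x - s)‖ ≤ φ (x - (t - 1)) := by
  rw [Real.norm_of_nonneg (hnonneg _)]
  rw [Metric.mem_ball, Real.dist_eq, abs_sub_lt_iff] at hs
  exact hmono (by linarith)

lemma antitone_integral_neg_sub (hmono : Monotone φ)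
    (hint : ∀ t, Integrable (fun ω => φ (-X ω - t)) P) :
    Antitone fun t => ∫ ω, φ (-X ω - t) ∂P :=
  fun _ _ hst => integral_mono (hint _) (hint _) fun _ => hmono (by linarith)

lemma continuous_integral_neg_sub (hcont : Continuous φ) (hmono : Monotone φ)
    (hnonneg : ∀ x, 0 ≤ φ x) (hint : ∀ t, Integrable (fun ω => φ (-X ω - t)) P) :
    Continuous fun t => ∫ ω, φ (-X ω - t) ∂P :=
  continuous_iff_continuousAt.2 fun t =>
    continuousAt_of_dominated (bound := fun ω => φ (-X ω - (t - 1)))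
      (Eventually.of_forall fun s => (hint s).1)
      (eventually_of_mem (Metric.ball_mem_nhds t one_pos) fun _ hs => Eventually.of_forall
        fun ω => hmono.norm_apply_sub_le_of_mem_ball hnonneg hs (-X ω))
      (hint (t - 1))
      (Eventually.of_forall fun _ => (hcont.comp (continuous_const.sub continuous_id)).continuousAt)

lemma hasDerivAt_integral_neg_sub (hd : ∀ x, HasDerivAt φ (φ' x) x) (hmono : Monotone φ')
    (hnonneg : ∀ x, 0 ≤ φ' x) (hint : ∀ t, Integrable (fun ω => φ (-X ω - t)) P)
    (hint' : ∀ t, Integrable (fun ω => φ' (-X ω - t)) P) (t : ℝ) :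
    HasDerivAt (fun s => ∫ ω, φ (-X ω - s) ∂P) (-∫ ω, φ' (-X ω - t) ∂P) t := by
  rw [← integral_neg]
  exact (hasDerivAt_integral_of_dominated_loc_of_deriv_le
    (bound := fun ω => φ' (-X ω - (t - 1))) (Metric.ball_mem_nhds t one_pos)
    (Eventually.of_forall fun s => (hint s).1) (hint t) (hint' t).1.neg
    (Eventually.of_forall fun ω s hs => by
      simpa only [norm_neg] using hmono.norm_apply_sub_le_of_mem_ball hnonneg hs (-X ω))
    (hint' (t - 1)) (Eventually.of_forall fun ω s _ => (hd _).comp_const_sub (-X ω) s)).2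

lemma exists_lt_integral_neg_sub [IsProbabilityMeasure P] (hmono : Monotone φ)
    (hint : ∀ t, Integrable (fun ω => φ (-X ω - t)) P) {c y : ℝ} (hy : c < φ y) :
    ∃ t, c < ∫ ω, φ (-X ω - t) ∂P := by
  -- truncated at `φ y`, the integrands increase to the integrable constant `φ y` as `t → -∞`
  set f : ℕ → Ω → ℝ := fun n ω => min (φ (-X ω + n)) (φ y)
  have hf_int : ∀ n, Integrable (f n) P := fun n => by
    have h := hint (-(n : ℝ))
    simp only [sub_neg_eq_add] at h
    exact h.inf (integrable_const (φ y))
  have hf_mono : ∀ ω, Monotone fun n => f n ω := fun ω n m hnm =>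
    min_le_min_right _ (hmono (by simp [hnm]))
  have hf_lim : ∀ ω, Tendsto (fun n => f n ω) atTop (𝓝 (φ y)) := fun ω =>
    tendsto_const_nhds.congr' <| (eventually_ge_atTop ⌈y + X ω⌉₊).mono fun n hn =>
      (min_eq_right (hmono (by linarith [Nat.ceil_le.1 hn]))).symm
  have hlim : Tendsto (fun n => ∫ ω, f n ω ∂P) atTop (𝓝 (φ y)) := by
    simpa using integral_tendsto_of_tendsto_of_monotone hf_int (integrable_const (φ y))
      (ae_of_all _ hf_mono) (ae_of_all _ hf_lim)
  obtain ⟨n, hn⟩ := (hlim.eventually (eventually_gt_nhds hy)).exists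
  refine ⟨-(n : ℝ), hn.trans_le (integral_mono (hf_int n) (hint _) fun ω => ?_)⟩
  simp only [sub_neg_eq_add]
  exact min_le_left _ _

end IntegralShift

theorem oce_sr_characterization_general
    {Ω : Type*} [MeasurableSpace Ω] (P : Measure Ω) [IsProbabilityMeasure P]
    (u u' : ℝ → ℝ)
    (hu_convex : ConvexOn ℝ Set.univ u)
    (hu_mono : Monotone u)
    (hu_deriv : ∀ x : ℝ, HasDerivAt u (u' x) x)
    (hu'_cont : Continuous u')
    (hu'_range : (1 : ℝ) ∈ interior (Set.range u'))
    (X : Ω → ℝ)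
    (hXu : ∀ t : ℝ, Integrable (fun ω => u (-X ω - t)) P)
    (hXu' : ∀ t : ℝ, Integrable (fun ω => u' (-X ω - t)) P)
    (tl : ℝ)
    (htl : 0 < 1 - (∫ ω, u' (-X ω - tl) ∂P)) :
    ConvexOn ℝ Set.univ (fun t : ℝ => t + ∫ ω, u (-X ω - t) ∂P) ∧
    (∀ t : ℝ, HasDerivAt (fun s : ℝ => s + ∫ ω, u (-X ω - s) ∂P)
      (1 - ∫ ω, u' (-X ω - t) ∂P) t) ∧
    1 - (∫ ω, u' (-X ω - SR P u' 1 X) ∂P) = 0 ∧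
    (∀ t : ℝ, SR P u' 1 X + (∫ ω, u (-X ω - SR P u' 1 X) ∂P) ≤
      t + ∫ ω, u (-X ω - t) ∂P) ∧
    (⨅ t : ℝ, (t + ∫ ω, u (-X ω - t) ∂P)) =
      SR P u' 1 X + ∫ ω, u (-X ω - SR P u' 1 X) ∂P := by
  set G : ℝ → ℝ := fun t => t + ∫ ω, u (-X ω - t) ∂P
  set F : ℝ → ℝ := fun t => ∫ ω, u' (-X ω - t) ∂P
  have hu'_mono := hu_convex.monotone_of_hasDerivAt hu_deriv
  have hu'_nonneg := hu_mono.nonneg_of_hasDerivAt hu_deriv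
  have hF_anti : Antitone F := antitone_integral_neg_sub hu'_mono hXu'
  have hG_deriv : ∀ t, HasDerivAt G (1 - F t) t := fun t => by
    have := (hasDerivAt_id' t).add
      (hasDerivAt_integral_neg_sub hu_deriv hu'_mono hu'_nonneg hXu hXu' t)
    rwa [← sub_eq_add_neg] at this
  have hG_convex : ConvexOn ℝ univ G := by
    refine Monotone.convexOn_univ_of_deriv (fun t => (hG_deriv t).differentiableAt) ?_
    intro s t hst
    rw [(hG_deriv s).deriv, (hG_deriv t).deriv]
    exact sub_le_sub_left (hF_anti hst) 1
  obtain ⟨_, ⟨y, rfl⟩, hy⟩ : (range u' ∩ Ioi 1).Nonempty :=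
    nonempty_of_mem (inter_mem (mem_nhdsWithin_of_mem_nhds (mem_interior_iff_mem_nhds.1 hu'_range))
      self_mem_nhdsWithin)
  obtain ⟨t₀, ht₀⟩ := exists_lt_integral_neg_sub hu'_mono hXu' hy
  have hroot : F (SR P u' 1 X) = 1 := hF_anti.apply_sInf_setOf_le_eq
    (continuous_integral_neg_sub hu'_cont hu'_mono hu'_nonneg hXu') (sub_pos.1 htl).le ht₀
  have hmin : ∀ t, G (SR P u' 1 X) ≤ G t := isMinOn_univ_iff.1 <|
    hG_convex.isMinOn_of_rightDeriv_eq_zero (by simp) <| by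
      rw [(hG_deriv _).hasDerivWithinAt.derivWithin (uniqueDiffWithinAt_Ioi _), hroot, sub_self]
  exact ⟨hG_convex, hG_deriv, sub_eq_zero.2 hroot.symm, hmin,
    ciInf_eq_of_forall_ge_of_forall_gt_exists_lt hmin fun _ hw => ⟨_, hw⟩⟩

/-- For a utility function `u` and `X ∈ 𝒳̄_u` satisfying the bracketing
condition for `G'_X(t) = 1 - E[u'(-X-t)]`: the map `G_X(t) = t + E[u(-X-t)]` is convex
and differentiable with derivative `G'_X`; `SR_{u',1}(X)` is a root of `G'_X` and a
minimizer of `G_X`; and `OCE_u(X) = SR_{u',1}(X) + E[u(-X - SR_{u',1}(X))]`. -/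
theorem oce_sr_characterization
    {Ω : Type*} [MeasurableSpace Ω] (P : Measure Ω) [IsProbabilityMeasure P]
    (u u' : ℝ → ℝ)
    (hu_convex : ConvexOn ℝ Set.univ u)
    (hu_mono : Monotone u)
    (hu_deriv : ∀ x : ℝ, HasDerivAt u (u' x) x)
    (hu'_cont : Continuous u')
    (hu'_range : (1 : ℝ) ∈ interior (Set.range u'))
    (X : Ω → ℝ)
    (hXu : ∀ t : ℝ, Integrable (fun ω => u (-X ω - t)) P)
    (hXu' : ∀ t : ℝ, Integrable (fun ω => u' (-X ω - t)) P)
    (tu tl : ℝ)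
    (htu : 1 - (∫ ω, u' (-X ω - tu) ∂P) ≤ 0)
    (htl : 0 < 1 - (∫ ω, u' (-X ω - tl) ∂P)) :
    ConvexOn ℝ Set.univ (fun t : ℝ => t + ∫ ω, u (-X ω - t) ∂P) ∧
    (∀ t : ℝ, HasDerivAt (fun s : ℝ => s + ∫ ω, u (-X ω - s) ∂P)
      (1 - ∫ ω, u' (-X ω - t) ∂P) t) ∧
    1 - (∫ ω, u' (-X ω - SR P u' 1 X) ∂P) = 0 ∧
    (∀ t : ℝ, SR P u' 1 X + (∫ ω, u (-X ω - SR P u' 1 X) ∂P) ≤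
      t + ∫ ω, u (-X ω - t) ∂P) ∧
    (⨅ t : ℝ, (t + ∫ ω, u (-X ω - t) ∂P)) =
      SR P u' 1 X + ∫ ω, u (-X ω - SR P u' 1 X) ∂P :=
  oce_sr_characterization_general P u u' hu_convex hu_mono hu_deriv hu'_cont hu'_range X hXu hXu' tl
    htl
end

section
/- Let u be a utility function as in the context and let X ∈ 𝒳̄_u be such that there exist t_u, t_l ∈ ℝ with G'_X(t_u) ≤ 0 < G'_X(t_l), where G'_X(t) = 1 − E[u'(−X−t)]. Let Z₁, …, Z_m be i.i.d. with the law of X, set SR_m(Z) = inf{ t : (1/m)∑_{j=1}^m u'(−Z_j − t) ≤ 1 } and OCE_m(Z) = SR_m(Z) + (1/m)∑_{j=1}^m u(−Z_j − SR_m(Z)). Let δ, ε > 0 and let t̂ be a random variable satisfying, almost surely, |t̂ − SR_m(Z)| ≤ δ and |(1/m)∑_{j=1}^m u'(−Z_j − t̂) − 1| ≤ ε, and set ŝ = t̂ + (1/m)∑_{j=1}^m u(−Z_j − t̂). Then E[|ŝ − OCE_u(X)|] ≤ δε + E[|OCE_m(Z) − OCE_u(X)|] and E[(ŝ − OCE_u(X))²]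 ≤ 2δ²ε² + 2E[(OCE_m(Z) − OCE_u(X))²]. -/
open MeasureTheory ProbabilityTheory

/-- The optimized certainty equivalent `OCE_u(X) = inf_{t ∈ ℝ} { t + E[u(-X-t)] }`. -/
noncomputable def OCE {Ω : Type*} [MeasurableSpace Ω] (P : Measure Ω)
    (u : ℝ → ℝ) (X : Ω → ℝ) : ℝ :=
  ⨅ t : ℝ, (t + ∫ ω, u (-X ω - t) ∂P)

/-- The SAA estimator `SR_m(Z)(ω) = inf { t : (1/m) ∑ u'(-Z_j(ω)-t) ≤ 1 }`. -/
noncomputable def SRm {Ω : Type*} (m : ℕ) (u' : ℝ → ℝ) (Z : Fin m → Ω → ℝ) (ω : Ω) : ℝ :=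
  sInf {t : ℝ | (1 / (m : ℝ)) * ∑ j : Fin m, u' (-Z j ω - t) ≤ 1}

/-- The SAA estimator `OCE_m(Z)(ω) = SR_m(Z)(ω) + (1/m) ∑ u(-Z_j(ω) - SR_m(Z)(ω))`. -/
noncomputable def OCEm {Ω : Type*} (m : ℕ) (u u' : ℝ → ℝ) (Z : Fin m → Ω → ℝ) (ω : Ω) : ℝ :=
  SRm m u' Z ω + (1 / (m : ℝ)) * ∑ j : Fin m, u (-Z j ω - SRm m u' Z ω)

/-!
`OCE_m(Z)` is the value of the convex empirical objective `G(t) = t + (1/m) ∑ u(-Z_j - t)` at the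
root `SR_m(Z)` of its derivative `G'(t) = 1 - (1/m) ∑ u'(-Z_j - t)`. Comparing `G` with its tangent
lines at `SR_m(Z)` and at `t̂` gives, pointwise,
`0 ≤ G(t̂) - G(SR_m(Z)) ≤ G'(t̂) (t̂ - SR_m(Z)) ≤ δε`,
and both moment bounds follow from the triangle inequality and `(a + b)² ≤ 2a² + 2b²`.
-/

open Filter Set Topology
open scoped BigOperators

theorem exists_lt_and_exists_gt_of_mem_interior_range {α : Type*} {f : α → ℝ} {a : ℝ}
    (h : a ∈ interior (range f)) : (∃ x, f x < a) ∧ ∃ x, a < f x := by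
  have hnhds : ∀ᶠ b in 𝓝 a, b ∈ range f := mem_interior_iff_mem_nhds.1 h
  have hleft : ∀ᶠ b in 𝓝[<] a, b ∈ range f ∧ b < a :=
    (hnhds.filter_mono nhdsWithin_le_nhds).and self_mem_nhdsWithin
  have hright : ∀ᶠ b in 𝓝[>] a, b ∈ range f ∧ a < b :=
    (hnhds.filter_mono nhdsWithin_le_nhds).and self_mem_nhdsWithin
  obtain ⟨_, ⟨x, rfl⟩, hx⟩ := hleft.exists
  obtain ⟨_, ⟨y, rfl⟩, hy⟩ := hright.exists
  exact ⟨⟨x, hx⟩, ⟨y, hy⟩⟩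

section Convex

variable {G : ℝ → ℝ}

theorem ConvexOn.add_mul_sub_le_of_hasDerivAt {g x : ℝ} (hG : ConvexOn ℝ univ G)
    (hx : HasDerivAt G g x) (y : ℝ) : G x + g * (y - x) ≤ G y := by
  rcases lt_trichotomy x y with hxy | rfl | hyx
  · have := hG.le_slope_of_hasDerivAt trivial trivial hxy hx
    rw [slope_def_field, le_div_iff₀ (sub_pos.2 hxy)] at this
    linarith
  · simp
  · have := hG.slope_le_of_hasDerivAt trivial trivial hyx hx
    rw [slope_def_field, div_le_iff₀ (sub_pos.2 hyx)] at this
    linarith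

theorem ConvexOn.abs_sub_le_mul_of_hasDerivAt {s t g δ ε : ℝ} (hG : ConvexOn ℝ univ G)
    (hs : HasDerivAt G 0 s) (ht : HasDerivAt G g t) (hts : |t - s| ≤ δ) (hg : |g| ≤ ε) :
    |G t - G s| ≤ δ * ε := by
  have hlower := hG.add_mul_sub_le_of_hasDerivAt hs t
  have hupper := hG.add_mul_sub_le_of_hasDerivAt ht s
  have hgap : g * (t - s) ≤ δ * ε :=
    calc g * (t - s) ≤ |g| * |t - s| := by rw [← abs_mul]; exact le_abs_self _
      _ ≤ ε * δ := mul_le_mul hg hts (abs_nonneg _) ((abs_nonneg _).trans hg)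
      _ = δ * ε := mul_comm _ _
  rw [abs_le]
  constructor <;> nlinarith

end Convex

section Antitone

variable {φ : ℝ → ℝ} {c : ℝ}

theorem Antitone.bddBelow_setOf_le_s10 (hφ : Antitone φ) (hhi : ∃ t, c < φ t) :
    BddBelow {t | φ t ≤ c} := by
  obtain ⟨t₀, ht₀⟩ := hhi
  exact ⟨t₀, fun t ht => le_of_not_gt fun htt₀ => (hφ htt₀.le).not_gt (ht.trans_lt ht₀)⟩

theorem Antitone.csInf_setOf_le_le_iff (hφ : Antitone φ) (hcont : Continuous φ)
    (hlo : ∃ t, φ t ≤ c) (hhi : ∃ t, c < φ t) (t : ℝ) :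
    sInf {t | φ t ≤ c} ≤ t ↔ φ t ≤ c := by
  have hmem : sInf {t | φ t ≤ c} ∈ {t | φ t ≤ c} :=
    (isClosed_le hcont continuous_const).csInf_mem hlo (hφ.bddBelow_setOf_le_s10 hhi)
  exact ⟨fun h => (hφ h).trans hmem, fun h => csInf_le (hφ.bddBelow_setOf_le_s10 hhi) h⟩

theorem Antitone.apply_csInf_setOf_le (hφ : Antitone φ) (hcont : Continuous φ)
    (hlo : ∃ t, φ t ≤ c) (hhi : ∃ t, c < φ t) : φ (sInf {t | φ t ≤ c}) = c := by
  set s := sInf {t | φ t ≤ c}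
  have hiff := hφ.csInf_setOf_le_le_iff hcont hlo hhi
  refine le_antisymm ((hiff s).1 le_rfl) ?_
  -- points to the left of the infimum lie outside the set
  have hleft : ∀ᶠ t in 𝓝[<] s, c ≤ φ t := eventually_nhdsWithin_of_forall fun t ht =>
    le_of_lt (not_le.1 fun h => (mem_Iio.1 ht).not_ge ((hiff t).2 h))
  exact _root_.ge_of_tendsto (hcont.continuousAt.tendsto.mono_left nhdsWithin_le_nhds) hleft

end Antitone

noncomputable def sampleMean (m : ℕ) (f : ℝ → ℝ) (z : Fin m → ℝ) (t : ℝ) : ℝ :=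
  (1 / (m : ℝ)) * ∑ j : Fin m, f (-z j - t)

/-- At the sample `z = fun j => Z j ω`, `SRm m u' Z ω` unfolds to `sampleSR m u' z` and
`OCEm m u u' Z ω` to `sampleObjective m u z (sampleSR m u' z)`. -/
noncomputable def sampleSR (m : ℕ) (u' : ℝ → ℝ) (z : Fin m → ℝ) : ℝ :=
  sInf {t | sampleMean m u' z t ≤ 1}

noncomputable def sampleObjective (m : ℕ) (u : ℝ → ℝ) (z : Fin m → ℝ) (t : ℝ) : ℝ :=
  t + sampleMean m u z t

section SampleMean

variable {m : ℕ} {f : ℝ → ℝ} {z : Fin m → ℝ}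

theorem sampleMean_eq_expect (t : ℝ) : sampleMean m f z t = 𝔼 j, f (-z j - t) := by
  rw [sampleMean, Fintype.expect_eq_sum_div_card, Fintype.card_fin, one_div_mul_eq_div]

theorem sampleMean_antitone (hf : Monotone f) : Antitone (sampleMean m f z) := fun s t hst => by
  simp only [sampleMean_eq_expect]
  exact Finset.expect_le_expect fun j _ => hf (by linarith)

theorem continuous_sampleMean (hf : Continuous f) : Continuous (sampleMean m f z) := by
  unfold sampleMean
  fun_prop

theorem hasDerivAt_sampleMean {f' : ℝ → ℝ} (hf : ∀ x, HasDerivAt f (f' x) x) (t : ℝ) :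
    HasDerivAt (sampleMean m f z) (-sampleMean m f' z t) t := by
  have hsum : HasDerivAt (fun t => ∑ j : Fin m, f (-z j - t)) (∑ j : Fin m, -f' (-z j - t)) t :=
    HasDerivAt.fun_sum fun j _ => by
      simpa [Function.comp_def] using (hf (-z j - t)).comp t ((hasDerivAt_id t).const_sub (-z j))
  unfold sampleMean
  simpa [Finset.sum_neg_distrib] using hsum.const_mul (1 / (m : ℝ))

theorem exists_sampleMean_le (hf : Monotone f) (hm : 0 < m) {x c : ℝ} (hx : f x ≤ c) :
    ∃ t, sampleMean m f z t ≤ c := by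
  have : Nonempty (Fin m) := ⟨⟨0, hm⟩⟩
  obtain ⟨T, hT⟩ := (finite_range fun j => -z j - x).bddAbove
  refine ⟨T, ?_⟩
  rw [sampleMean_eq_expect]
  exact Finset.expect_le Finset.univ_nonempty fun j _ =>
    (hf (by linarith [hT ⟨j, rfl⟩])).trans hx

theorem exists_lt_sampleMean (hf : Monotone f) (hm : 0 < m) {x c : ℝ} (hx : c < f x) :
    ∃ t, c < sampleMean m f z t := by
  have : Nonempty (Fin m) := ⟨⟨0, hm⟩⟩
  obtain ⟨T, hT⟩ := (finite_range fun j => z j + x).bddAbove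
  refine ⟨-T, ?_⟩
  rw [sampleMean_eq_expect]
  exact hx.trans_le <|
    Finset.le_expect Finset.univ_nonempty fun j _ => hf (by linarith [hT ⟨j, rfl⟩])

theorem Measurable.sampleMean {Ω : Type*} [MeasurableSpace Ω] {Z : Fin m → Ω → ℝ} {T : Ω → ℝ}
    (hf : Continuous f) (hZ : ∀ j, Measurable (Z j)) (hT : Measurable T) :
    Measurable fun ω => sampleMean m f (fun j => Z j ω) (T ω) :=
  (Finset.measurable_sum _ fun j _ => hf.measurable.comp ((hZ j).neg.sub hT)).const_mul _

end SampleMean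

section SampleSR

variable {m : ℕ} {u u' : ℝ → ℝ} {x₀ x₁ : ℝ}

theorem sampleSR_le_iff (hcont : Continuous u') (hmono : Monotone u') (hm : 0 < m)
    (hx₀ : u' x₀ ≤ 1) (hx₁ : 1 < u' x₁) (z : Fin m → ℝ) (t : ℝ) :
    sampleSR m u' z ≤ t ↔ sampleMean m u' z t ≤ 1 :=
  (sampleMean_antitone hmono).csInf_setOf_le_le_iff (continuous_sampleMean hcont)
    (exists_sampleMean_le hmono hm hx₀) (exists_lt_sampleMean hmono hm hx₁) t

theorem sampleMean_sampleSR (hcont : Continuous u') (hmono : Monotone u') (hm : 0 < m)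
    (hx₀ : u' x₀ ≤ 1) (hx₁ : 1 < u' x₁) (z : Fin m → ℝ) :
    sampleMean m u' z (sampleSR m u' z) = 1 :=
  (sampleMean_antitone hmono).apply_csInf_setOf_le (continuous_sampleMean hcont)
    (exists_sampleMean_le hmono hm hx₀) (exists_lt_sampleMean hmono hm hx₁)

theorem hasDerivAt_sampleObjective (hu : ∀ x, HasDerivAt u (u' x) x) (z : Fin m → ℝ) (t : ℝ) :
    HasDerivAt (sampleObjective m u z) (1 - sampleMean m u' z t) t := by
  unfold sampleObjective
  simpa [sub_eq_add_neg] using (hasDerivAt_id' t).fun_add (hasDerivAt_sampleMean hu t)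

theorem convexOn_sampleObjective (hu : ∀ x, HasDerivAt u (u' x) x) (hmono : Monotone u')
    (z : Fin m → ℝ) : ConvexOn ℝ univ (sampleObjective m u z) := by
  have hG := hasDerivAt_sampleObjective hu z
  refine Monotone.convexOn_univ_of_deriv (fun t => (hG t).differentiableAt) fun s t hst => ?_
  rw [(hG s).deriv, (hG t).deriv]
  exact sub_le_sub_left (sampleMean_antitone hmono hst) 1

theorem abs_sampleObjective_sub_le (hu : ∀ x, HasDerivAt u (u' x) x) (hcont : Continuous u')
    (hmono : Monotone u') (hm : 0 < m) (hx₀ : u' x₀ ≤ 1) (hx₁ : 1 < u' x₁) (z : Fin m → ℝ)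
    {t δ ε : ℝ} (htδ : |t - sampleSR m u' z| ≤ δ) (htε : |sampleMean m u' z t - 1| ≤ ε) :
    |sampleObjective m u z t - sampleObjective m u z (sampleSR m u' z)| ≤ δ * ε := by
  have hcrit : HasDerivAt (sampleObjective m u z) 0 (sampleSR m u' z) := by
    simpa [sampleMean_sampleSR hcont hmono hm hx₀ hx₁] using
      hasDerivAt_sampleObjective hu z (sampleSR m u' z)
  exact (convexOn_sampleObjective hu hmono z).abs_sub_le_mul_of_hasDerivAt hcrit
    (hasDerivAt_sampleObjective hu z t) htδ (by rwa [abs_sub_comm])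

variable {Ω : Type*} [MeasurableSpace Ω] {Z : Fin m → Ω → ℝ}

theorem measurable_SRm (hcont : Continuous u') (hmono : Monotone u') (hm : 0 < m)
    (hx₀ : u' x₀ ≤ 1) (hx₁ : 1 < u' x₁) (hZ : ∀ j, Measurable (Z j)) :
    Measurable (SRm m u' Z) := by
  refine measurable_of_Ioi fun c => ?_
  have hpre : SRm m u' Z ⁻¹' Ioi c = {ω | 1 < sampleMean m u' (fun j => Z j ω) c} := by
    ext ω
    show c < sampleSR m u' (fun j => Z j ω) ↔ 1 < sampleMean m u' (fun j => Z j ω) c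
    rw [← not_le, ← not_le, sampleSR_le_iff hcont hmono hm hx₀ hx₁]
  rw [hpre]
  exact measurableSet_lt measurable_const (Measurable.sampleMean hcont hZ measurable_const)

theorem measurable_OCEm (hu : Continuous u) (hcont : Continuous u') (hmono : Monotone u')
    (hm : 0 < m) (hx₀ : u' x₀ ≤ 1) (hx₁ : 1 < u' x₁) (hZ : ∀ j, Measurable (Z j)) :
    Measurable (OCEm m u u' Z) :=
  have hSR := measurable_SRm hcont hmono hm hx₀ hx₁ hZ
  hSR.add (Measurable.sampleMean hu hZ hSR)

end SampleSR

section Integral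

variable {Ω : Type*} [MeasurableSpace Ω] {P : Measure Ω} [IsProbabilityMeasure P]

/-- The reverse bound `hgf` covers the junk case: if `g` is not integrable, neither is `f`, and
both integrals vanish. -/
theorem integral_le_add_mul_integral_of_ae_le {f g : Ω → ℝ} {c k : ℝ} (hc : 0 ≤ c) (hk : 0 ≤ k)
    (hf : 0 ≤ᵐ[P] f) (hg : 0 ≤ᵐ[P] g) (hgm : AEStronglyMeasurable g P)
    (hfg : ∀ᵐ ω ∂P, f ω ≤ c + k * g ω) (hgf : ∀ᵐ ω ∂P, g ω ≤ c + k * f ω) :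
    ∫ ω, f ω ∂P ≤ c + k * ∫ ω, g ω ∂P := by
  by_cases hgi : Integrable g P
  · calc ∫ ω, f ω ∂P ≤ ∫ ω, (c + k * g ω) ∂P :=
          integral_mono_of_nonneg hf ((integrable_const c).add (hgi.const_mul k)) hfg
      _ = c + k * ∫ ω, g ω ∂P := by
          rw [integral_add (integrable_const c) (hgi.const_mul k), integral_const,
            integral_const_mul, probReal_univ, one_smul]
  · have hfi : ¬ Integrable f P := fun hfi =>
      hgi <| ((integrable_const c).add (hfi.const_mul k)).mono' hgm <| by
        filter_upwards [hg, hgf] with ω h0 h1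
        rwa [Real.norm_eq_abs, abs_of_nonneg h0]
    rw [integral_undef hfi]
    have := integral_nonneg_of_ae hg
    positivity

variable {x y : Ω → ℝ} {η : ℝ}

theorem integral_abs_sub_le_of_ae_abs_sub_le (C : ℝ) (hη : 0 ≤ η)
    (hy : AEStronglyMeasurable y P) (hxy : ∀ᵐ ω ∂P, |x ω - y ω| ≤ η) :
    ∫ ω, |x ω - C| ∂P ≤ η + ∫ ω, |y ω - C| ∂P := by
  have h := integral_le_add_mul_integral_of_ae_le (P := P) (f := fun ω => |x ω - C|)
    (g := fun ω => |y ω - C|) hη zero_le_one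
    (ae_of_all _ fun _ => abs_nonneg _) (ae_of_all _ fun _ => abs_nonneg _)
    (continuous_abs.comp_aestronglyMeasurable (hy.sub aestronglyMeasurable_const))
    (hxy.mono fun ω h => by linarith [abs_sub_le (x ω) (y ω) C])
    (hxy.mono fun ω h => by linarith [abs_sub_le (y ω) (x ω) C, abs_sub_comm (x ω) (y ω)])
  simpa only [one_mul] using h

theorem integral_sq_sub_le_of_ae_abs_sub_le (C : ℝ)
    (hy : AEStronglyMeasurable y P) (hxy : ∀ᵐ ω ∂P, |x ω - y ω| ≤ η) :
    ∫ ω, (x ω - C) ^ 2 ∂P ≤ 2 * η ^ 2 + 2 * ∫ ω, (y ω - C) ^ 2 ∂P := by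
  have hsq : ∀ᵐ ω ∂P, (x ω - y ω) ^ 2 ≤ η ^ 2 :=
    hxy.mono fun ω h => sq_le_sq' (neg_le_of_abs_le h) (le_of_abs_le h)
  -- `(a + b)² ≤ 2a² + 2b²` with `x - C = (x - y) + (y - C)`, and symmetrically
  exact integral_le_add_mul_integral_of_ae_le (P := P) (f := fun ω => (x ω - C) ^ 2)
    (g := fun ω => (y ω - C) ^ 2) (c := 2 * η ^ 2) (by positivity) zero_le_two
    (ae_of_all _ fun _ => sq_nonneg _) (ae_of_all _ fun _ => sq_nonneg _)
    ((hy.sub aestronglyMeasurable_const).pow 2)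
    (hsq.mono fun ω h => by nlinarith [sq_nonneg (x ω - y ω - (y ω - C))])
    (hsq.mono fun ω h => by nlinarith [sq_nonneg (y ω - x ω - (x ω - C))])

end Integral

theorem oce_approximate_estimator_bounds_general
    {Ω : Type*} [MeasurableSpace Ω] (P : Measure Ω) [IsProbabilityMeasure P]
    (u u' : ℝ → ℝ)
    (hu_convex : ConvexOn ℝ Set.univ u)
    (hu_deriv : ∀ x : ℝ, HasDerivAt u (u' x) x)
    (hu'_cont : Continuous u')
    (hu'_range : (1 : ℝ) ∈ interior (Set.range u'))
    (X : Ω → ℝ)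
    (m : ℕ) (hm : 0 < m)
    (Z : Fin m → Ω → ℝ) (hZmeas : ∀ j, Measurable (Z j))
    (δ ε : ℝ) (hδ : 0 < δ) (hε : 0 < ε)
    (that : Ω → ℝ)
    (hthat₁ : ∀ᵐ ω ∂P, |that ω - SRm m u' Z ω| ≤ δ)
    (hthat₂ : ∀ᵐ ω ∂P,
      |(1 / (m : ℝ)) * ∑ j : Fin m, u' (-Z j ω - that ω) - 1| ≤ ε) :
    (∫ ω, |that ω + (1 / (m : ℝ)) * ∑ j : Fin m, u (-Z j ω - that ω) -
        OCE P u X| ∂P) ≤ δ * ε + ∫ ω, |OCEm m u u' Z ω - OCE P u X| ∂P ∧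
    (∫ ω, (that ω + (1 / (m : ℝ)) * ∑ j : Fin m, u (-Z j ω - that ω) -
        OCE P u X) ^ 2 ∂P) ≤
      2 * δ ^ 2 * ε ^ 2 + 2 * ∫ ω, (OCEm m u u' Z ω - OCE P u X) ^ 2 ∂P := by
  have hu_diff : Differentiable ℝ u := fun x => (hu_deriv x).differentiableAt
  have hu'_mono : Monotone u' := fun x y hxy => by
    simpa only [(hu_deriv _).deriv] using
      hu_convex.monotoneOn_deriv (fun x _ => hu_diff x) trivial trivial hxy
  obtain ⟨⟨x₀, hx₀⟩, ⟨x₁, hx₁⟩⟩ := exists_lt_and_exists_gt_of_mem_interior_range hu'_range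
  have hOCEm : Measurable (OCEm m u u' Z) :=
    measurable_OCEm hu_diff.continuous hu'_cont hu'_mono hm hx₀.le hx₁ hZmeas
  have hclose : ∀ᵐ ω ∂P, |that ω + (1 / (m : ℝ)) * ∑ j : Fin m, u (-Z j ω - that ω) -
      OCEm m u u' Z ω| ≤ δ * ε := by
    filter_upwards [hthat₁, hthat₂] with ω h₁ h₂
    exact abs_sampleObjective_sub_le hu_deriv hu'_cont hu'_mono hm hx₀.le hx₁ _ h₁ h₂
  refine ⟨integral_abs_sub_le_of_ae_abs_sub_le _ (by positivity)
    hOCEm.aestronglyMeasurable hclose, ?_⟩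
  simpa only [mul_pow, mul_assoc] using
    integral_sq_sub_le_of_ae_abs_sub_le _ hOCEm.aestronglyMeasurable hclose

/-- Error bounds for an approximate SAA estimator of the OCE risk computed
to accuracy `(δ, ε)`. -/
theorem oce_approximate_estimator_bounds
    {Ω : Type*} [MeasurableSpace Ω] (P : Measure Ω) [IsProbabilityMeasure P]
    (u u' : ℝ → ℝ)
    (hu_convex : ConvexOn ℝ Set.univ u)
    (hu_mono : Monotone u)
    (hu_deriv : ∀ x : ℝ, HasDerivAt u (u' x) x)
    (hu'_cont : Continuous u')
    (hu'_range : (1 : ℝ) ∈ interior (Set.range u'))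
    (X : Ω → ℝ) (hXmeas : Measurable X)
    (hXu : ∀ t : ℝ, Integrable (fun ω => u (-X ω - t)) P)
    (hXu' : ∀ t : ℝ, Integrable (fun ω => u' (-X ω - t)) P)
    (tu tl : ℝ)
    (htu : 1 - (∫ ω, u' (-X ω - tu) ∂P) ≤ 0)
    (htl : 0 < 1 - (∫ ω, u' (-X ω - tl) ∂P))
    (m : ℕ) (hm : 0 < m)
    (Z : Fin m → Ω → ℝ) (hZmeas : ∀ j, Measurable (Z j))
    (hZindep : iIndepFun Z P)
    (hZdist : ∀ j, Measure.map (Z j) P = Measure.map X P)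
    (δ ε : ℝ) (hδ : 0 < δ) (hε : 0 < ε)
    (that : Ω → ℝ)
    (hthat₁ : ∀ᵐ ω ∂P, |that ω - SRm m u' Z ω| ≤ δ)
    (hthat₂ : ∀ᵐ ω ∂P,
      |(1 / (m : ℝ)) * ∑ j : Fin m, u' (-Z j ω - that ω) - 1| ≤ ε) :
    (∫ ω, |that ω + (1 / (m : ℝ)) * ∑ j : Fin m, u (-Z j ω - that ω) -
        OCE P u X| ∂P) ≤ δ * ε + ∫ ω, |OCEm m u u' Z ω - OCE P u X| ∂P ∧
    (∫ ω, (that ω + (1 / (m : ℝ)) * ∑ j : Fin m, u (-Z j ω - that ω) -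
        OCE P u X) ^ 2 ∂P) ≤
      2 * δ ^ 2 * ε ^ 2 + 2 * ∫ ω, (OCEm m u u' Z ω - OCE P u X) ^ 2 ∂P :=
  oce_approximate_estimator_bounds_general P u u' hu_convex hu_deriv hu'_cont hu'_range X m hm Z
    hZmeas δ ε hδ hε that hthat₁ hthat₂
end

section
/- Let Θ ⊆ ℝᵈ be convex, let ξ be a real-valued random variable on a probability space (Ω, 𝓕, P), let F : Θ × ℝ → ℝ, and let μ ≥ 0. Suppose for P-almost every ω the map θ ↦ F(θ, ξ(ω)) is μ-strongly concave on Θ, i.e., F(αθ₁ + (1−α)θ₂, ξ(ω)) ≥ αF(θ₁, ξ(ω)) + (1−α)F(θ₂, ξ(ω)) + (μα(1−α)/2)‖θ₁ − θ₂‖₂² for all θ₁, θ₂ ∈ Θ and α ∈ [0,1]. Let 𝒳 be a convex set of real-valued random variables on Ω that contains F(θ, ξ) for every θ ∈ Θ and is closed under adding real constants, and let ρ : 𝒳 → ℝ satisfy: (monotonicity) X₁ ≤ X₂ a.s. implies ρ(X₁) ≥ ρ(X₂) for X₁, X₂ ∈ 𝒳; (cash invariance) ρ(X + c) = ρ(X)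 − c for X ∈ 𝒳 and c ∈ ℝ; (convexity) ρ(αX₁ + (1−α)X₂) ≤ αρ(X₁) + (1−α)ρ(X₂) for X₁, X₂ ∈ 𝒳 and α ∈ [0,1]. Then h(θ) = ρ(F(θ, ξ)) is μ-strongly convex on Θ: h(αθ₁ + (1−α)θ₂) ≤ αh(θ₁) + (1−α)h(θ₂) − (μα(1−α)/2)‖θ₁ − θ₂‖₂² for all θ₁, θ₂ ∈ Θ and α ∈ [0,1]. -/
open MeasureTheory

/-! Strong concavity gives, almost surely, `αF(θ₁) + (1-α)F(θ₂) + c ≤ F(αθ₁ + (1-α)θ₂)` with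
`c = μα(1-α)‖θ₁ - θ₂‖²/2`. Monotonicity and cash invariance turn this into
`ρ(F(αθ₁ + (1-α)θ₂)) ≤ ρ(αF(θ₁) + (1-α)F(θ₂)) - c`, and convexity of `ρ` bounds the right side. -/

section RiskMeasure

variable {Ω : Type*} [MeasurableSpace Ω] {P : Measure Ω} {𝒳 : Set (Ω → ℝ)}
  {ρ : (Ω → ℝ) → ℝ}

theorem risk_le_sub_of_ae_add_const_le
    (hρ_mono : ∀ X₁ ∈ 𝒳, ∀ X₂ ∈ 𝒳, (∀ᵐ ω ∂P, X₁ ω ≤ X₂ ω) → ρ X₂ ≤ ρ X₁)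
    (hρ_cash : ∀ X ∈ 𝒳, ∀ c : ℝ, ρ (fun ω => X ω + c) = ρ X - c)
    (h𝒳_const : ∀ X ∈ 𝒳, ∀ c : ℝ, (fun ω => X ω + c) ∈ 𝒳)
    {X Y : Ω → ℝ} (hX : X ∈ 𝒳) (hY : Y ∈ 𝒳) {c : ℝ}
    (hXY : ∀ᵐ ω ∂P, X ω + c ≤ Y ω) :
    ρ Y ≤ ρ X - c :=
  hρ_cash X hX c ▸ hρ_mono _ (h𝒳_const X hX c) Y hY hXY

theorem risk_le_convex_combination_sub_of_ae_le
    (hρ_mono : ∀ X₁ ∈ 𝒳, ∀ X₂ ∈ 𝒳, (∀ᵐ ω ∂P, X₁ ω ≤ X₂ ω) → ρ X₂ ≤ ρ X₁)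
    (hρ_cash : ∀ X ∈ 𝒳, ∀ c : ℝ, ρ (fun ω => X ω + c) = ρ X - c)
    (hρ_convex : ∀ X₁ ∈ 𝒳, ∀ X₂ ∈ 𝒳, ∀ α ∈ Set.Icc (0 : ℝ) 1,
      ρ (fun ω => α * X₁ ω + (1 - α) * X₂ ω) ≤ α * ρ X₁ + (1 - α) * ρ X₂)
    (h𝒳_convex : ∀ X₁ ∈ 𝒳, ∀ X₂ ∈ 𝒳, ∀ α ∈ Set.Icc (0 : ℝ) 1,
      (fun ω => α * X₁ ω + (1 - α) * X₂ ω) ∈ 𝒳)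
    (h𝒳_const : ∀ X ∈ 𝒳, ∀ c : ℝ, (fun ω => X ω + c) ∈ 𝒳)
    {X₁ X₂ Y : Ω → ℝ} (hX₁ : X₁ ∈ 𝒳) (hX₂ : X₂ ∈ 𝒳) (hY : Y ∈ 𝒳)
    {α c : ℝ} (hα : α ∈ Set.Icc (0 : ℝ) 1)
    (hXY : ∀ᵐ ω ∂P, α * X₁ ω + (1 - α) * X₂ ω + c ≤ Y ω) :
    ρ Y ≤ α * ρ X₁ + (1 - α) * ρ X₂ - c :=
  calc ρ Y ≤ ρ (fun ω => α * X₁ ω + (1 - α) * X₂ ω) - c :=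
        risk_le_sub_of_ae_add_const_le hρ_mono hρ_cash h𝒳_const
          (h𝒳_convex X₁ hX₁ X₂ hX₂ α hα) hY hXY
    _ ≤ α * ρ X₁ + (1 - α) * ρ X₂ - c := by
        gcongr
        exact hρ_convex X₁ hX₁ X₂ hX₂ α hα

end RiskMeasure

theorem risk_of_strongly_concave_is_strongly_convex_general
    {Ω : Type*} [MeasurableSpace Ω] (P : Measure Ω)
    {d : ℕ} (Θ : Set (EuclideanSpace ℝ (Fin d))) (hΘ : Convex ℝ Θ)
    (ξ : Ω → ℝ) (F : EuclideanSpace ℝ (Fin d) → ℝ → ℝ) (μ : ℝ)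
    (hF_concave : ∀ᵐ ω ∂P, ∀ θ₁ ∈ Θ, ∀ θ₂ ∈ Θ, ∀ α ∈ Set.Icc (0 : ℝ) 1,
      α * F θ₁ (ξ ω) + (1 - α) * F θ₂ (ξ ω) + μ * α * (1 - α) / 2 * ‖θ₁ - θ₂‖ ^ 2 ≤
        F (α • θ₁ + (1 - α) • θ₂) (ξ ω))
    (𝒳 : Set (Ω → ℝ))
    (h𝒳_convex : ∀ X₁ ∈ 𝒳, ∀ X₂ ∈ 𝒳, ∀ α ∈ Set.Icc (0 : ℝ) 1,
      (fun ω => α * X₁ ω + (1 - α) * X₂ ω) ∈ 𝒳)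
    (h𝒳_F : ∀ θ ∈ Θ, (fun ω => F θ (ξ ω)) ∈ 𝒳)
    (h𝒳_const : ∀ X ∈ 𝒳, ∀ c : ℝ, (fun ω => X ω + c) ∈ 𝒳)
    (ρ : (Ω → ℝ) → ℝ)
    (hρ_mono : ∀ X₁ ∈ 𝒳, ∀ X₂ ∈ 𝒳, (∀ᵐ ω ∂P, X₁ ω ≤ X₂ ω) → ρ X₂ ≤ ρ X₁)
    (hρ_cash : ∀ X ∈ 𝒳, ∀ c : ℝ, ρ (fun ω => X ω + c) = ρ X - c)
    (hρ_convex : ∀ X₁ ∈ 𝒳, ∀ X₂ ∈ 𝒳, ∀ α ∈ Set.Icc (0 : ℝ) 1,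
      ρ (fun ω => α * X₁ ω + (1 - α) * X₂ ω) ≤ α * ρ X₁ + (1 - α) * ρ X₂) :
    ∀ θ₁ ∈ Θ, ∀ θ₂ ∈ Θ, ∀ α ∈ Set.Icc (0 : ℝ) 1,
      ρ (fun ω => F (α • θ₁ + (1 - α) • θ₂) (ξ ω)) ≤
        α * ρ (fun ω => F θ₁ (ξ ω)) + (1 - α) * ρ (fun ω => F θ₂ (ξ ω)) -
          μ * α * (1 - α) / 2 * ‖θ₁ - θ₂‖ ^ 2 := by
  intro θ₁ hθ₁ θ₂ hθ₂ α hα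
  have hθ : α • θ₁ + (1 - α) • θ₂ ∈ Θ :=
    hΘ hθ₁ hθ₂ hα.1 (sub_nonneg.2 hα.2) (add_sub_cancel α 1)
  exact risk_le_convex_combination_sub_of_ae_le hρ_mono hρ_cash hρ_convex h𝒳_convex
    h𝒳_const (h𝒳_F θ₁ hθ₁) (h𝒳_F θ₂ hθ₂) (h𝒳_F _ hθ) hα
    (hF_concave.mono fun ω hω => hω θ₁ hθ₁ θ₂ hθ₂ α hα)

/-- If `F(·, ξ)` is a.s. `μ`-strongly concave on a convex set `Θ` and `ρ` is
a convex risk measure (monotone, cash invariant, convex) on a suitable convex family `𝒳`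
of random variables containing the `F(θ, ξ)`, then `h(θ) = ρ(F(θ, ξ))` is `μ`-strongly
convex on `Θ`. -/
theorem risk_of_strongly_concave_is_strongly_convex
    {Ω : Type*} [MeasurableSpace Ω] (P : Measure Ω) [IsProbabilityMeasure P]
    {d : ℕ} (Θ : Set (EuclideanSpace ℝ (Fin d))) (hΘ : Convex ℝ Θ)
    (ξ : Ω → ℝ) (F : EuclideanSpace ℝ (Fin d) → ℝ → ℝ) (μ : ℝ) (hμ : 0 ≤ μ)
    (hF_concave : ∀ᵐ ω ∂P, ∀ θ₁ ∈ Θ, ∀ θ₂ ∈ Θ, ∀ α ∈ Set.Icc (0 : ℝ) 1,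
      α * F θ₁ (ξ ω) + (1 - α) * F θ₂ (ξ ω) + μ * α * (1 - α) / 2 * ‖θ₁ - θ₂‖ ^ 2 ≤
        F (α • θ₁ + (1 - α) • θ₂) (ξ ω))
    (𝒳 : Set (Ω → ℝ))
    (h𝒳_convex : ∀ X₁ ∈ 𝒳, ∀ X₂ ∈ 𝒳, ∀ α ∈ Set.Icc (0 : ℝ) 1,
      (fun ω => α * X₁ ω + (1 - α) * X₂ ω) ∈ 𝒳)
    (h𝒳_F : ∀ θ ∈ Θ, (fun ω => F θ (ξ ω)) ∈ 𝒳)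
    (h𝒳_const : ∀ X ∈ 𝒳, ∀ c : ℝ, (fun ω => X ω + c) ∈ 𝒳)
    (ρ : (Ω → ℝ) → ℝ)
    (hρ_mono : ∀ X₁ ∈ 𝒳, ∀ X₂ ∈ 𝒳, (∀ᵐ ω ∂P, X₁ ω ≤ X₂ ω) → ρ X₂ ≤ ρ X₁)
    (hρ_cash : ∀ X ∈ 𝒳, ∀ c : ℝ, ρ (fun ω => X ω + c) = ρ X - c)
    (hρ_convex : ∀ X₁ ∈ 𝒳, ∀ X₂ ∈ 𝒳, ∀ α ∈ Set.Icc (0 : ℝ) 1,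
      ρ (fun ω => α * X₁ ω + (1 - α) * X₂ ω) ≤ α * ρ X₁ + (1 - α) * ρ X₂) :
    ∀ θ₁ ∈ Θ, ∀ θ₂ ∈ Θ, ∀ α ∈ Set.Icc (0 : ℝ) 1,
      ρ (fun ω => F (α • θ₁ + (1 - α) • θ₂) (ξ ω)) ≤
        α * ρ (fun ω => F θ₁ (ξ ω)) + (1 - α) * ρ (fun ω => F θ₂ (ξ ω)) -
          μ * α * (1 - α) / 2 * ‖θ₁ - θ₂‖ ^ 2 :=
  risk_of_strongly_concave_is_strongly_convex_general P Θ hΘ ξ F μ hF_concave 𝒳 h𝒳_convex h𝒳_F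
    h𝒳_const ρ hρ_mono hρ_cash hρ_convex
end

section
/- Suppose: l : ℝ → ℝ is continuously differentiable and strictly increasing; for every θ ∈ B, F(θ, ξ) ∈ 𝒳_l and there exist t_u(θ), t_l(θ) ∈ ℝ with g(t_u(θ), θ) ≤ 0 < g(t_l(θ), θ); for P-almost every ω, the map θ ↦ F(θ, ξ(ω)) is continuously differentiable on B; for every compact set K ⊆ ℝ × B, the random variables sup_{(t,θ)∈K} l'(−F(θ,ξ)−t) and sup_{(t,θ)∈K} l'(−F(θ,ξ)−t)·‖∇F(θ,ξ)‖₂ are integrable; and E[l'(−F(θ,ξ) − h(θ))] > 0 for every θ ∈ B. Then h is continuously differentiable on B and, for every θ ∈ B, ∇h(θ) = − E[l'(−F(θ,ξ) − h(θ)) ∇F(θ,ξ)] / E[l'(−F(θ,ξ) − h(θ))]. -/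
/-!
Write `g(θ, t) = E[l(-F(θ, ξ) - t)]`. Local domination of `l'(-F - t)·(1 + ‖∇F‖)` lets one
differentiate under the expectation, so `g` is C¹ on `B × ℝ` with partial derivatives
`∂_θ g = -E[l'(-F - t) ∇F]` and `∂_t g = -E[l'(-F - t)]`. Since `l` is strictly increasing,
`t ↦ g(θ, t)` is strictly decreasing and continuous, so by the bracketing hypothesis `h(θ)` is the
unique solution `t` of `g(θ, t) = λ`. Hence `h` coincides near each point with the function given
by the implicit function theorem (applicable because `∂_t g ≠ 0` at `(θ, h θ)`), so
`∇h = -∂_θ g / ∂_t g`, which is continuous since `h` and the partial derivatives are.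
-/

open MeasureTheory

/-- The UBSR objective `h(θ) = SR_{l,λ}(F(θ, ξ)) = inf { t : E[l(-F(θ,ξ)-t)] ≤ λ }`. -/
noncomputable def hUBSR {Ω : Type*} [MeasurableSpace Ω] (P : Measure Ω)
    (l : ℝ → ℝ) (lam : ℝ) {d : ℕ} (F : EuclideanSpace ℝ (Fin d) → ℝ → ℝ) (ξ : Ω → ℝ)
    (θ : EuclideanSpace ℝ (Fin d)) : ℝ :=
  sInf {t : ℝ | (∫ ω, l (-F θ (ξ ω) - t) ∂P) ≤ lam}

open Filter Topology Set

section Measurability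

variable {Ω E F : Type*} [MeasurableSpace Ω] {μ : Measure Ω}

-- `f' ω v` is the a.e. limit of the difference quotients `c (f ω (x + c⁻¹ • v) - f ω x)`, `c → ∞`.
theorem aestronglyMeasurable_fderiv_apply [NormedAddCommGroup E] [NormedSpace ℝ E]
    [NormedAddCommGroup F] [NormedSpace ℝ F] {f : Ω → E → F} {f' : Ω → E →L[ℝ] F} {x : E}
    (hf_meas : ∀ᶠ y in 𝓝 x, AEStronglyMeasurable (fun ω => f ω y) μ)
    (hf : ∀ᵐ ω ∂μ, HasFDerivAt (f ω) (f' ω) x) (v : E) :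
    AEStronglyMeasurable (fun ω => f' ω v) μ := by
  set c : ℕ → ℝ := fun n => n + 1
  have hc : Tendsto c atTop atTop := tendsto_atTop_add_const_right _ 1 tendsto_natCast_atTop_atTop
  have hpoints : Tendsto (fun n => x + (c n)⁻¹ • v) atTop (𝓝 x) := by
    simpa using tendsto_const_nhds.add ((tendsto_inv_atTop_zero.comp hc).smul_const v)
  obtain ⟨N, hN⟩ := eventually_atTop.1 (hpoints.eventually hf_meas)
  refine aestronglyMeasurable_of_tendsto_ae atTop
    (f := fun n ω => c (n + N) • (f ω (x + (c (n + N))⁻¹ • v) - f ω x)) (fun n => ?_) ?_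
  · exact ((hN _ (Nat.le_add_left N n)).sub hf_meas.self_of_nhds).const_smul _
  · filter_upwards [hf] with ω hω
    exact (hω.lim v (tendsto_norm_atTop_atTop.comp hc)).comp (tendsto_add_atTop_nat N)

theorem aestronglyMeasurable_of_hasGradientAt [NormedAddCommGroup E] [InnerProductSpace ℝ E]
    [FiniteDimensional ℝ E] {f : Ω → E → ℝ} {G : Ω → E} {x : E}
    (hf_meas : ∀ᶠ y in 𝓝 x, AEStronglyMeasurable (fun ω => f ω y) μ)
    (hf : ∀ᵐ ω ∂μ, HasGradientAt (f ω) (G ω) x) : AEStronglyMeasurable G μ := by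
  set b := stdOrthonormalBasis ℝ E
  have hcoord (i) : AEStronglyMeasurable (fun ω => inner ℝ (b i) (G ω)) μ :=
    (aestronglyMeasurable_fderiv_apply hf_meas (hf.mono fun _ => hasGradientAt_iff_hasFDerivAt.1)
      (b i)).congr (ae_of_all _ fun ω => by simp [real_inner_comm])
  exact (Finset.aestronglyMeasurable_fun_sum _ fun i _ => (hcoord i).smul_const (b i)).congr
    (ae_of_all _ fun ω => b.sum_repr' (G ω))

end Measurability

theorem MeasureTheory.integral_lt_integral_of_forall_lt {Ω : Type*} [MeasurableSpace Ω]
    {μ : Measure Ω} [NeZero μ] {f g : Ω → ℝ} (hf : Integrable f μ) (hg : Integrable g μ)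
    (hfg : ∀ ω, f ω < g ω) : ∫ ω, f ω ∂μ < ∫ ω, g ω ∂μ := by
  have hsupp : Function.support (fun ω => g ω - f ω) = univ :=
    eq_univ_of_forall fun ω => (sub_pos.2 (hfg ω)).ne'
  rw [← sub_pos, ← integral_sub hg hf, integral_pos_iff_support_of_nonneg
    (fun ω => (sub_pos.2 (hfg ω)).le) (hg.sub hf)]
  simp [hsupp, NeZero.ne μ]

theorem StrictAnti.apply_csInf_setOf_le_eq {α β : Type*} [ConditionallyCompleteLinearOrder α]
    [TopologicalSpace α] [OrderTopology α] [DenselyOrdered α] [LinearOrder β] [TopologicalSpace β]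
    [OrderClosedTopology β] {g : α → β} (hg : StrictAnti g) (hg_cont : Continuous g)
    {c : β} {tu tl : α} (hu : g tu ≤ c) (hl : c < g tl) : g (sInf {t | g t ≤ c}) = c := by
  have htl : tl ≤ tu := hg.le_iff_ge.1 (hu.trans hl.le)
  obtain ⟨t₀, -, ht₀⟩ := intermediate_value_Icc' htl hg_cont.continuousOn ⟨hu, hl.le⟩
  have hsub : {t | g t ≤ c} = Ici t₀ := by
    ext t
    rw [mem_ofPred_eq, ← ht₀, hg.le_iff_ge, mem_Ici]
  rw [hsub, csInf_Ici, ht₀]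

theorem IsCompact.le_biSup_of_continuousOn {α β : Type*} [TopologicalSpace α]
    [ConditionallyCompleteLinearOrder β] [TopologicalSpace β] [ClosedIciTopology β] {K : Set α}
    {f : α → β} (hK : IsCompact K) (hf : ContinuousOn f K) {x : α} (hx : x ∈ K) :
    f x ≤ ⨆ y ∈ K, f y :=
  le_ciSup₂ (f := fun y (_ : y ∈ K) => f y)
    ((hK.bddAbove_image hf).mono (by rintro _ ⟨_, ⟨y, rfl⟩, hy, rfl⟩; exact ⟨y, hy, rfl⟩)) x hx

theorem HasStrictFDerivAt.hasFDerivAt_of_unique_root {E : Type*} [NormedAddCommGroup E]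
    [NormedSpace ℝ E] [CompleteSpace E] {f : E × ℝ → ℝ} {f' : E × ℝ →L[ℝ] ℝ} {h : E → ℝ} {x₀ : E}
    (hf : HasStrictFDerivAt f f' (x₀, h x₀)) (hf' : f' (0, 1) ≠ 0)
    (h_unique : ∀ᶠ x in 𝓝 x₀, ∀ t, f (x, t) = f (x₀, h x₀) → t = h x) :
    HasFDerivAt h (-(f' (0, 1))⁻¹ • f' ∘L .inl ℝ E ℝ) x₀ := by
  set a := f' (0, 1)
  have hpartial : f' ∘L .inr ℝ E ℝ = a • .id ℝ ℝ := by
    ext; simp [a]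
  have hinv : (f' ∘L .inr ℝ E ℝ).IsInvertible := by
    refine .of_inverse (g := a⁻¹ • .id ℝ ℝ) ?_ ?_ <;> ext <;> simp [hpartial, hf']
  have h_eq : h =ᶠ[𝓝 x₀] hf.implicitFunctionOfProdDomain hinv := by
    filter_upwards [hf.eventually_apply_implicitFunctionOfProdDomain hinv, h_unique] with x hx hu
    exact (hu _ hx).symm
  refine ((hf.hasStrictFDerivAt_implicitFunctionOfProdDomain hinv).hasFDerivAt.congr_of_eventuallyEq
    h_eq).congr_fderiv ?_
  ext v
  have hinverse : (f' ∘L .inr ℝ E ℝ).inverse (f' (v, 0)) = a⁻¹ * f' (v, 0) := by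
    rw [hinv.inverse_apply_eq, hpartial]
    simp [hf']
  simp [hinverse]

theorem hasFDerivAt_integral_comp_of_dominated {Ω H : Type*} [MeasurableSpace Ω]
    [NormedAddCommGroup H] [NormedSpace ℝ H] {P : Measure Ω} {φ φ' : ℝ → ℝ}
    {Y : H → Ω → ℝ} {Y' : H → Ω → H →L[ℝ] ℝ} {p₀ : H} {U : Set H} {bound : Ω → ℝ}
    {L : H →L[ℝ] ℝ} (hφ : ∀ x, HasDerivAt φ (φ' x) x) (hφ' : Continuous φ') (hU : U ∈ 𝓝 p₀)
    (hY_int : ∀ p ∈ U, Integrable (fun ω => φ (Y p ω)) P)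
    (hY_meas : AEStronglyMeasurable (Y p₀) P) (hY'_meas : AEStronglyMeasurable (Y' p₀) P)
    (hY : ∀ᵐ ω ∂P, ∀ p ∈ U, HasFDerivAt (Y · ω) (Y' p ω) p)
    (hbound_int : Integrable bound P)
    (hbound : ∀ᵐ ω ∂P, ∀ p ∈ U, |φ' (Y p ω)| * ‖Y' p ω‖ ≤ bound ω)
    (hL : ∀ v, L v = ∫ ω, φ' (Y p₀ ω) * Y' p₀ ω v ∂P) :
    HasFDerivAt (fun p => ∫ ω, φ (Y p ω) ∂P) L p₀ := by
  have hF'_meas : AEStronglyMeasurable (fun ω => φ' (Y p₀ ω) • Y' p₀ ω) P :=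
    (hφ'.comp_aestronglyMeasurable hY_meas).smul hY'_meas
  have hF'_le : ∀ᵐ ω ∂P, ∀ p ∈ U, ‖φ' (Y p ω) • Y' p ω‖ ≤ bound ω := by
    filter_upwards [hbound] with ω hω p hp
    rw [norm_smul, Real.norm_eq_abs]
    exact hω p hp
  have hF'_int : Integrable (fun ω => φ' (Y p₀ ω) • Y' p₀ ω) P :=
    hbound_int.mono' hF'_meas (hF'_le.mono fun ω hω => hω p₀ (mem_of_mem_nhds hU))
  have hL_eq : ∫ ω, φ' (Y p₀ ω) • Y' p₀ ω ∂P = L := by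
    ext v
    rw [ContinuousLinearMap.integral_apply hF'_int, hL]
    rfl
  rw [← hL_eq]
  refine hasFDerivAt_integral_of_dominated_of_fderiv_le hU ?_ (hY_int p₀ (mem_of_mem_nhds hU))
    hF'_meas hF'_le hbound_int ?_
  · filter_upwards [hU] with p hp using (hY_int p hp).1
  · filter_upwards [hY] with ω hω p hp using (hφ _).comp_hasFDerivAt p (hω p hp)

theorem exists_integrable_bound_of_integrable_iSup {Ω E : Type*} [MeasurableSpace Ω]
    [NormedAddCommGroup E] [LocallyCompactSpace E] {P : Measure Ω} {l' : ℝ → ℝ}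
    {X : E → Ω → ℝ} {X' : E → Ω → E} {B : Set E} (hB : IsOpen B) (hl' : ∀ x, 0 ≤ l' x)
    (hl'_cont : Continuous l') (hX : ∀ᵐ ω ∂P, ContinuousOn (X · ω) B)
    (hX' : ∀ᵐ ω ∂P, ContinuousOn (X' · ω) B)
    (hdom₁ : ∀ K ⊆ univ ×ˢ B, IsCompact K →
      Integrable (fun ω => ⨆ p ∈ K, l' (-X p.2 ω - p.1)) P)
    (hdom₂ : ∀ K ⊆ univ ×ˢ B, IsCompact K →
      Integrable (fun ω => ⨆ p ∈ K, l' (-X p.2 ω - p.1) * ‖X' p.2 ω‖) P)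
    {θ : E} (hθ : θ ∈ B) (t : ℝ) :
    ∃ U ∈ 𝓝 (θ, t), ∃ bound : Ω → ℝ, Integrable bound P ∧
      ∀ᵐ ω ∂P, ∀ p ∈ U, |l' (-X p.1 ω - p.2)| * (1 + ‖X' p.1 ω‖) ≤ bound ω := by
  obtain ⟨K, hK, hθK, hKB⟩ := exists_compact_subset hB hθ
  set C : Set (ℝ × E) := Metric.closedBall t 1 ×ˢ K
  have hC : IsCompact C := (isCompact_closedBall t 1).prod hK
  have hCB : C ⊆ univ ×ˢ B := prod_mono (subset_univ _) hKB
  refine ⟨K ×ˢ Metric.closedBall t 1, prod_mem_nhds (mem_interior_iff_mem_nhds.1 hθK)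
    (Metric.closedBall_mem_nhds t one_pos), _, (hdom₁ C hCB hC).add (hdom₂ C hCB hC), ?_⟩
  filter_upwards [hX, hX'] with ω hXω hX'ω p hp
  have hsnd : MapsTo Prod.snd C B := fun q hq => hKB hq.2
  have hl'C : ContinuousOn (fun q : ℝ × E => l' (-X q.2 ω - q.1)) C :=
    hl'_cont.comp_continuousOn ((hXω.comp continuousOn_snd hsnd).neg.sub continuousOn_fst)
  have hpC : (p.2, p.1) ∈ C := ⟨hp.2, hp.1⟩
  rw [abs_of_nonneg (hl' _), mul_one_add]
  exact add_le_add (hC.le_biSup_of_continuousOn hl'C hpC)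
    (hC.le_biSup_of_continuousOn (hl'C.mul (hX'ω.comp continuousOn_snd hsnd).norm) hpC)

section ExpectedLoss

variable {Ω E : Type*} [MeasurableSpace Ω]

-- The paper's `g(t, θ) + λ`, with `θ` first so that the implicit function theorem on `E × ℝ`
-- solves for the second coordinate.
noncomputable def expectedLoss (P : Measure Ω) (l : ℝ → ℝ) (X : E → Ω → ℝ) (p : E × ℝ) : ℝ :=
  ∫ ω, l (-X p.1 ω - p.2) ∂P

theorem strictAnti_expectedLoss {P : Measure Ω} [NeZero P] {l : ℝ → ℝ} {X : E → Ω → ℝ} {θ : E}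
    (hl : StrictMono l) (hX : ∀ t, Integrable (fun ω => l (-X θ ω - t)) P) :
    StrictAnti fun t => expectedLoss P l X (θ, t) := fun _ _ hst =>
  integral_lt_integral_of_forall_lt (hX _) (hX _) fun _ => hl (by linarith)

noncomputable def weightedGradient [NormedAddCommGroup E] [NormedSpace ℝ E] (P : Measure Ω)
    (l' : ℝ → ℝ) (X : E → Ω → ℝ) (X' : E → Ω → E) (p : E × ℝ) : E :=
  ∫ ω, l' (-X p.1 ω - p.2) • X' p.1 ω ∂P

noncomputable def implicitGradient [NormedAddCommGroup E] [NormedSpace ℝ E] (P : Measure Ω)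
    (l' : ℝ → ℝ) (X : E → Ω → ℝ) (X' : E → Ω → E) (h : E → ℝ) (θ : E) : E :=
  -((expectedLoss P l' X (θ, h θ))⁻¹ • weightedGradient P l' X X' (θ, h θ))

variable [NormedAddCommGroup E] [InnerProductSpace ℝ E] [CompleteSpace E]

noncomputable def expectedLossFDeriv (P : Measure Ω) (l' : ℝ → ℝ) (X : E → Ω → ℝ)
    (X' : E → Ω → E) (p : E × ℝ) : E × ℝ →L[ℝ] ℝ :=
  -((InnerProductSpace.toDual ℝ E (weightedGradient P l' X X' p)).comp (.fst ℝ E ℝ) +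
    expectedLoss P l' X p • .snd ℝ E ℝ)

-- The hypotheses of the theorem for a random field `X θ ω`, with the domination by integrable
-- suprema over compact sets replaced by the local domination it implies.
structure LossRegularity (P : Measure Ω) (l l' : ℝ → ℝ) (X : E → Ω → ℝ) (X' : E → Ω → E)
    (B : Set E) : Prop where
  isOpen : IsOpen B
  hasDerivAt_loss : ∀ x, HasDerivAt l (l' x) x
  continuous_loss_deriv : Continuous l'
  integrable : ∀ θ ∈ B, ∀ t, Integrable (fun ω => l (-X θ ω - t)) P
  aestronglyMeasurable : ∀ θ ∈ B, AEStronglyMeasurable (X θ) P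
  aestronglyMeasurable_grad : ∀ θ ∈ B, AEStronglyMeasurable (X' θ) P
  hasGradientAt : ∀ᵐ ω ∂P, ∀ θ ∈ B, HasGradientAt (X · ω) (X' θ ω) θ
  continuousOn_grad : ∀ᵐ ω ∂P, ContinuousOn (X' · ω) B
  locally_dominated : ∀ θ ∈ B, ∀ t, ∃ U ∈ 𝓝 (θ, t), ∃ bound : Ω → ℝ, Integrable bound P ∧
    ∀ᵐ ω ∂P, ∀ p ∈ U, |l' (-X p.1 ω - p.2)| * (1 + ‖X' p.1 ω‖) ≤ bound ω

namespace LossRegularity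

variable {P : Measure Ω} {l l' : ℝ → ℝ} {X : E → Ω → ℝ} {X' : E → Ω → E} {B : Set E}
  {p : E × ℝ}

theorem of_integrable_iSup [FiniteDimensional ℝ E] (hB : IsOpen B)
    (hl : ∀ x, HasDerivAt l (l' x) x) (hl'_cont : Continuous l') (hl_mono : StrictMono l)
    (hX_int : ∀ θ ∈ B, ∀ t, Integrable (fun ω => l (-X θ ω - t)) P)
    (hX : ∀ᵐ ω ∂P, ∀ θ ∈ B, HasGradientAt (X · ω) (X' θ ω) θ)
    (hX' : ∀ᵐ ω ∂P, ContinuousOn (X' · ω) B)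
    (hdom₁ : ∀ K ⊆ univ ×ˢ B, IsCompact K →
      Integrable (fun ω => ⨆ p ∈ K, l' (-X p.2 ω - p.1)) P)
    (hdom₂ : ∀ K ⊆ univ ×ˢ B, IsCompact K →
      Integrable (fun ω => ⨆ p ∈ K, l' (-X p.2 ω - p.1) * ‖X' p.2 ω‖) P) :
    LossRegularity P l l' X X' B := by
  have hl_cont : Continuous l := continuous_iff_continuousAt.2 fun x => (hl x).continuousAt
  -- `X θ` is read off from `l (-X θ - 0)`, as `x ↦ l (-x - 0)` is a continuous injection.
  have hX_meas : ∀ θ ∈ B, AEStronglyMeasurable (X θ) P := fun θ hθ => by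
    have hemb : MeasurableEmbedding fun x : ℝ => l (-x - 0) :=
      (hl_cont.comp (continuous_neg.sub continuous_const)).measurableEmbedding
        (hl_mono.injective.comp fun x y hxy => by simpa using hxy)
    exact (hemb.aemeasurable_comp_iff.1 (hX_int θ hθ 0).aemeasurable).aestronglyMeasurable
  exact
    { isOpen := hB
      hasDerivAt_loss := hl
      continuous_loss_deriv := hl'_cont
      integrable := hX_int
      aestronglyMeasurable := hX_meas
      aestronglyMeasurable_grad := fun θ hθ => aestronglyMeasurable_of_hasGradientAt
        (f := fun ω θ => X θ ω) (eventually_of_mem (hB.mem_nhds hθ) hX_meas)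
        (hX.mono fun ω hω => hω θ hθ)
      hasGradientAt := hX
      continuousOn_grad := hX'
      locally_dominated := fun θ hθ t => exists_integrable_bound_of_integrable_iSup hB
        (fun x => (hl x).nonneg_of_monotone hl_mono.monotone) hl'_cont
        (hX.mono fun ω hω θ hθ => (hω θ hθ).continuousAt.continuousWithinAt) hX' hdom₁ hdom₂
        hθ t }

theorem eventually_fst_mem (hr : LossRegularity P l l' X X' B) (hp : p.1 ∈ B) :
    ∀ᶠ q in 𝓝 p, q.1 ∈ B :=
  continuousAt_fst.preimage_mem_nhds (hr.isOpen.mem_nhds hp)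

theorem aestronglyMeasurable_comp (hr : LossRegularity P l l' X X' B) {φ : ℝ → ℝ}
    (hφ : Continuous φ) (hp : p.1 ∈ B) : AEStronglyMeasurable (fun ω => φ (-X p.1 ω - p.2)) P :=
  hφ.comp_aestronglyMeasurable ((hr.aestronglyMeasurable _ hp).neg.sub aestronglyMeasurable_const)

theorem ae_continuousAt_neg_sub (hr : LossRegularity P l l' X X' B) (hp : p.1 ∈ B) :
    ∀ᵐ ω ∂P, ContinuousAt (fun q : E × ℝ => -X q.1 ω - q.2) p := by
  filter_upwards [hr.hasGradientAt] with ω hω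
  exact (((hω _ hp).continuousAt.comp continuousAt_fst).neg).sub continuousAt_snd

theorem integrable_loss_deriv (hr : LossRegularity P l l' X X' B) (hp : p.1 ∈ B) :
    Integrable (fun ω => l' (-X p.1 ω - p.2)) P := by
  obtain ⟨U, hU, bound, hbound_int, hbound⟩ := hr.locally_dominated p.1 hp p.2
  refine hbound_int.mono' (hr.aestronglyMeasurable_comp hr.continuous_loss_deriv hp) ?_
  filter_upwards [hbound] with ω hω
  refine le_trans ?_ (hω p (mem_of_mem_nhds hU))
  exact le_mul_of_one_le_right (abs_nonneg _) (le_add_of_nonneg_right (norm_nonneg _))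

theorem integrable_loss_deriv_smul_grad (hr : LossRegularity P l l' X X' B) (hp : p.1 ∈ B) :
    Integrable (fun ω => l' (-X p.1 ω - p.2) • X' p.1 ω) P := by
  obtain ⟨U, hU, bound, hbound_int, hbound⟩ := hr.locally_dominated p.1 hp p.2
  refine hbound_int.mono' ((hr.aestronglyMeasurable_comp hr.continuous_loss_deriv hp).smul
    (hr.aestronglyMeasurable_grad _ hp)) ?_
  filter_upwards [hbound] with ω hω
  refine le_trans ?_ (hω p (mem_of_mem_nhds hU))
  rw [norm_smul, Real.norm_eq_abs]
  exact mul_le_mul_of_nonneg_left (le_add_of_nonneg_left zero_le_one) (abs_nonneg _)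

theorem hasFDerivAt_expectedLoss (hr : LossRegularity P l l' X X' B) (hp : p.1 ∈ B) :
    HasFDerivAt (expectedLoss P l X) (expectedLossFDeriv P l' X X' p) p := by
  obtain ⟨U, hU, bound, hbound_int, hbound⟩ := hr.locally_dominated p.1 hp p.2
  refine hasFDerivAt_integral_comp_of_dominated (Y := fun q ω => -X q.1 ω - q.2)
    (Y' := fun q ω => -((InnerProductSpace.toDual ℝ E (X' q.1 ω)).comp (.fst ℝ E ℝ) + .snd ℝ E ℝ))
    hr.hasDerivAt_loss hr.continuous_loss_deriv (inter_mem hU (hr.eventually_fst_mem hp))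
    (fun q hq => hr.integrable _ hq.2 _)
    ((hr.aestronglyMeasurable _ hp).neg.sub aestronglyMeasurable_const)
    ?_ ?_ hbound_int ?_ ?_
  · have hcont : Continuous fun v : E =>
        -((InnerProductSpace.toDual ℝ E v).comp (.fst ℝ E ℝ) + .snd ℝ E ℝ) :=
      (((InnerProductSpace.toDual ℝ E).continuous.clm_comp continuous_const).add
        continuous_const).neg
    exact hcont.comp_aestronglyMeasurable (hr.aestronglyMeasurable_grad _ hp)
  · filter_upwards [hr.hasGradientAt] with ω hω q hq
    have hX := (hasGradientAt_iff_hasFDerivAt.1 (hω q.1 hq.2)).comp q hasFDerivAt_fst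
    exact (hX.neg.sub hasFDerivAt_snd).congr_fderiv (neg_add' _ _).symm
  · filter_upwards [hbound] with ω hω q hq
    refine le_trans ?_ (hω q hq.1)
    rw [norm_neg, add_comm 1]
    gcongr
    refine (norm_add_le _ _).trans (add_le_add ?_ (ContinuousLinearMap.norm_snd_le ℝ E ℝ))
    refine (ContinuousLinearMap.opNorm_comp_le _ _).trans ?_
    rw [LinearIsometryEquiv.norm_map]
    exact mul_le_of_le_one_right (norm_nonneg _) (ContinuousLinearMap.norm_fst_le ℝ E ℝ)
  · intro v
    have hV := (hr.integrable_loss_deriv_smul_grad hp).const_inner (𝕜 := ℝ) v.1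
    have hD := (hr.integrable_loss_deriv hp).mul_const v.2
    have hintegrand : ∀ ω, l' (-X p.1 ω - p.2) *
        (-((InnerProductSpace.toDual ℝ E (X' p.1 ω)).comp (.fst ℝ E ℝ) + .snd ℝ E ℝ)) v =
        -(inner ℝ v.1 (l' (-X p.1 ω - p.2) • X' p.1 ω) + l' (-X p.1 ω - p.2) * v.2) :=
      fun ω => by
        simp only [neg_apply, add_apply, ContinuousLinearMap.comp_apply,
          ContinuousLinearMap.coe_fst', ContinuousLinearMap.coe_snd',
          InnerProductSpace.toDual_apply_apply, real_inner_smul_right, real_inner_comm]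
        ring
    simp_rw [hintegrand]
    rw [integral_neg, integral_add hV hD, integral_mul_const,
      integral_inner (hr.integrable_loss_deriv_smul_grad hp)]
    simp [expectedLossFDeriv, weightedGradient, expectedLoss, real_inner_comm]

theorem continuousAt_expectedLoss_deriv (hr : LossRegularity P l l' X X' B) (hp : p.1 ∈ B) :
    ContinuousAt (expectedLoss P l' X) p := by
  obtain ⟨U, hU, bound, hbound_int, hbound⟩ := hr.locally_dominated p.1 hp p.2
  refine continuousAt_of_dominated ?_ ?_ hbound_int ?_
  · filter_upwards [hr.eventually_fst_mem hp] with q hq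
    exact hr.aestronglyMeasurable_comp hr.continuous_loss_deriv hq
  · filter_upwards [hU] with q hq
    filter_upwards [hbound] with ω hω
    refine le_trans ?_ (hω q hq)
    rw [Real.norm_eq_abs]
    exact le_mul_of_one_le_right (abs_nonneg _) (le_add_of_nonneg_right (norm_nonneg _))
  · filter_upwards [hr.ae_continuousAt_neg_sub hp] with ω hω
    exact hr.continuous_loss_deriv.continuousAt.comp hω

theorem continuousAt_weightedGradient (hr : LossRegularity P l l' X X' B) (hp : p.1 ∈ B) :
    ContinuousAt (weightedGradient P l' X X') p := by
  obtain ⟨U, hU, bound, hbound_int, hbound⟩ := hr.locally_dominated p.1 hp p.2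
  refine continuousAt_of_dominated ?_ ?_ hbound_int ?_
  · filter_upwards [hr.eventually_fst_mem hp] with q hq
    exact (hr.aestronglyMeasurable_comp hr.continuous_loss_deriv hq).smul
      (hr.aestronglyMeasurable_grad _ hq)
  · filter_upwards [hU] with q hq
    filter_upwards [hbound] with ω hω
    refine le_trans ?_ (hω q hq)
    rw [norm_smul, Real.norm_eq_abs]
    exact mul_le_mul_of_nonneg_left (le_add_of_nonneg_left zero_le_one) (abs_nonneg _)
  · filter_upwards [hr.ae_continuousAt_neg_sub hp, hr.continuousOn_grad] with ω hω hω'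
    exact (hr.continuous_loss_deriv.continuousAt.comp hω).smul
      ((hω'.continuousAt (hr.isOpen.mem_nhds hp)).comp continuousAt_fst)

theorem hasStrictFDerivAt_expectedLoss (hr : LossRegularity P l l' X X' B) (hp : p.1 ∈ B) :
    HasStrictFDerivAt (expectedLoss P l X) (expectedLossFDeriv P l' X X' p) p := by
  refine hasStrictFDerivAt_of_hasFDerivAt_of_continuousAt
    (hr.eventually_fst_mem hp |>.mono fun q hq => hr.hasFDerivAt_expectedLoss hq) ?_
  exact ((((InnerProductSpace.toDual ℝ E).continuous.continuousAt.comp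
    (hr.continuousAt_weightedGradient hp)).clm_comp continuousAt_const).add
    ((hr.continuousAt_expectedLoss_deriv hp).smul continuousAt_const)).neg

theorem continuous_expectedLoss_right (hr : LossRegularity P l l' X X' B) {θ : E} (hθ : θ ∈ B) :
    Continuous fun t => expectedLoss P l X (θ, t) :=
  continuous_iff_continuousAt.2 fun t =>
    (hr.hasFDerivAt_expectedLoss (p := (θ, t)) hθ).continuousAt.comp
      (Continuous.prodMk_right θ).continuousAt

theorem hasGradientAt_of_root (hr : LossRegularity P l l' X X' B) [NeZero P] (hl : StrictMono l)
    {h : E → ℝ} {c : ℝ} {θ₀ : E} (hθ₀ : θ₀ ∈ B)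
    (hroot : ∀ θ ∈ B, expectedLoss P l X (θ, h θ) = c)
    (hD : expectedLoss P l' X (θ₀, h θ₀) ≠ 0) :
    HasGradientAt h (implicitGradient P l' X X' h θ₀) θ₀ := by
  -- Strict monotonicity in `t` makes `h θ` the only root, so `h` is the implicit function.
  have h_unique : ∀ᶠ θ in 𝓝 θ₀, ∀ t,
      expectedLoss P l X (θ, t) = expectedLoss P l X (θ₀, h θ₀) → t = h θ := by
    filter_upwards [hr.isOpen.mem_nhds hθ₀] with θ hθ t ht
    rw [hroot θ₀ hθ₀, ← hroot θ hθ] at ht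
    exact (strictAnti_expectedLoss hl (hr.integrable θ hθ)).injective ht
  have hpartial : expectedLossFDeriv P l' X X' (θ₀, h θ₀) (0, 1) ≠ 0 := by
    simpa [expectedLossFDeriv] using hD
  rw [hasGradientAt_iff_hasFDerivAt]
  refine ((hr.hasStrictFDerivAt_expectedLoss hθ₀).hasFDerivAt_of_unique_root hpartial
    h_unique).congr_fderiv ?_
  ext v
  simp [implicitGradient, expectedLossFDeriv, real_inner_comm]

theorem continuousOn_implicitGradient (hr : LossRegularity P l l' X X' B) {h : E → ℝ}
    (hh : ContinuousOn h B) (hD : ∀ θ ∈ B, expectedLoss P l' X (θ, h θ) ≠ 0) :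
    ContinuousOn (implicitGradient P l' X X' h) B := fun θ hθ => by
  have hpair : ContinuousAt (fun θ => (θ, h θ)) θ :=
    continuousAt_id.prodMk (hh.continuousAt (hr.isOpen.mem_nhds hθ))
  have hD' := (hr.continuousAt_expectedLoss_deriv (p := (θ, h θ)) hθ).comp
    (f := fun θ => (θ, h θ)) hpair
  have hV := (hr.continuousAt_weightedGradient (p := (θ, h θ)) hθ).comp
    (f := fun θ => (θ, h θ)) hpair
  exact (((hD'.inv₀ (hD θ hθ)).smul hV).neg).continuousWithinAt

end LossRegularity

end ExpectedLoss

/-- Expression for the gradient of the UBSR objective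
`h(θ) = SR_{l,λ}(F(θ,ξ))`: `h` is continuously differentiable on `B` with
`∇h(θ) = -E[l'(-F(θ,ξ)-h(θ)) ∇F(θ,ξ)] / E[l'(-F(θ,ξ)-h(θ))]`. -/
theorem ubsr_gradient
    {Ω : Type*} [MeasurableSpace Ω] (P : Measure Ω) [IsProbabilityMeasure P]
    (l l' : ℝ → ℝ) (lam : ℝ)
    (hl_deriv : ∀ x : ℝ, HasDerivAt l (l' x) x)
    (hl'_cont : Continuous l')
    (hl_mono : StrictMono l)
    {d : ℕ} (B : Set (EuclideanSpace ℝ (Fin d))) (hB : IsOpen B)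
    (ξ : Ω → ℝ) (F : EuclideanSpace ℝ (Fin d) → ℝ → ℝ)
    (F' : EuclideanSpace ℝ (Fin d) → ℝ → EuclideanSpace ℝ (Fin d))
    (hF_int : ∀ θ ∈ B, ∀ t : ℝ, Integrable (fun ω => l (-F θ (ξ ω) - t)) P)
    (hbracket : ∀ θ ∈ B, ∃ tu tl : ℝ,
      (∫ ω, l (-F θ (ξ ω) - tu) ∂P) - lam ≤ 0 ∧
      0 < (∫ ω, l (-F θ (ξ ω) - tl) ∂P) - lam)
    (hF_diff : ∀ᵐ ω ∂P, ∀ θ ∈ B,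
      HasGradientAt (fun θ' => F θ' (ξ ω)) (F' θ (ξ ω)) θ)
    (hF'_cont : ∀ᵐ ω ∂P, ContinuousOn (fun θ => F' θ (ξ ω)) B)
    (hdom₁ : ∀ K : Set (ℝ × EuclideanSpace ℝ (Fin d)),
      K ⊆ Set.univ ×ˢ B → IsCompact K →
      Integrable (fun ω => ⨆ p ∈ K, l' (-F p.2 (ξ ω) - p.1)) P)
    (hdom₂ : ∀ K : Set (ℝ × EuclideanSpace ℝ (Fin d)),
      K ⊆ Set.univ ×ˢ B → IsCompact K →
      Integrable (fun ω => ⨆ p ∈ K, l' (-F p.2 (ξ ω) - p.1) * ‖F' p.2 (ξ ω)‖) P)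
    (hdenom : ∀ θ ∈ B,
      0 < ∫ ω, l' (-F θ (ξ ω) - hUBSR P l lam F ξ θ) ∂P) :
    (∀ θ ∈ B, HasGradientAt (hUBSR P l lam F ξ)
      (-((∫ ω, l' (-F θ (ξ ω) - hUBSR P l lam F ξ θ) ∂P)⁻¹ •
        ∫ ω, l' (-F θ (ξ ω) - hUBSR P l lam F ξ θ) • F' θ (ξ ω) ∂P)) θ) ∧
    ContinuousOn (fun θ =>
      -((∫ ω, l' (-F θ (ξ ω) - hUBSR P l lam F ξ θ) ∂P)⁻¹ •
        ∫ ω, l' (-F θ (ξ ω) - hUBSR P l lam F ξ θ) • F' θ (ξ ω) ∂P)) B := by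
  set X : EuclideanSpace ℝ (Fin d) → Ω → ℝ := fun θ ω => F θ (ξ ω)
  set h := hUBSR P l lam F ξ
  have hr : LossRegularity P l l' X (fun θ ω => F' θ (ξ ω)) B :=
    .of_integrable_iSup hB hl_deriv hl'_cont hl_mono hF_int hF_diff hF'_cont hdom₁ hdom₂
  have hroot : ∀ θ ∈ B, expectedLoss P l X (θ, h θ) = lam := fun θ hθ => by
    obtain ⟨tu, tl, hu, htl⟩ := hbracket θ hθ
    exact (strictAnti_expectedLoss hl_mono (hF_int θ hθ)).apply_csInf_setOf_le_eq
      (hr.continuous_expectedLoss_right hθ) (sub_nonpos.1 hu) (sub_pos.1 htl)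
  have hgrad (θ) (hθ : θ ∈ B) := hr.hasGradientAt_of_root hl_mono hθ hroot (hdenom θ hθ).ne'
  exact ⟨hgrad, hr.continuousOn_implicitGradient
    (fun θ hθ => (hgrad θ hθ).continuousAt.continuousWithinAt) fun θ hθ => (hdenom θ hθ).ne'⟩
end
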